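/- arXiv:1110.4795 — 6 statements merged into one kernel-verified Lean document; each statement's English description precedes it below -/
import Mathlib

section
/- Let $\phi(\lambda)=q+d\lambda+\int_0^\infty(1-e^{-\lambda x})\Pi(dx)$ be the Laplace exponent of a subordinator with tail $\overline\Pi(x)=\Pi(x,\infty)$. The positive increase condition $\liminf_{x\to 0}\frac{x\overline\Pi(x)}{\int_0^x\overline\Pi(u)\,du}>0$ is equivalent to $\liminf_{x\to 0}\frac{\int_0^{2x}\overline\Pi(y)\,dy}{\int_0^x\overline\Pi(y)\,dy}>1$. -/
open MeasureTheory Filter Real Set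
open scoped ENNReal Topology

/-!
Write `I x = ∫₀ˣ T` for the nonincreasing tail `T = Π̄`. Monotonicity of `T` gives `x T(x) ≤ I(x)` and
`x T(2x) ≤ I(2x) - I(x) ≤ x T(x)`. Dividing by `I(x)`, the doubling ratio `I(2x) / I(x)` exceeds `1`
by at most the increase ratio `x T(x) / I(x)` and by at least `x T(2x) / I(2x)`, half the increase
ratio at `2x`; so the liminf of the one is positive iff the liminf of the other exceeds `1`.
The measure `Π` enters only through `T` being finite on `(0, ∞)` and integrable near `0`, which
follow from `∫ min(1, x) Π(dx) < ∞` by Markov's inequality and the layer-cake formula.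
-/

section AntitoneIntegral

variable {T : ℝ → ℝ} {a b : ℝ}

theorem AntitoneOn.sub_mul_le_setIntegral_Ioc (hT : AntitoneOn T (Ioc a b))
    (hi : IntegrableOn T (Ioc a b)) (hab : a ≤ b) : (b - a) * T b ≤ ∫ u in Ioc a b, T u := by
  calc (b - a) * T b = ∫ _ in Ioc a b, T b := by
        rw [setIntegral_const, Real.volume_real_Ioc_of_le hab, smul_eq_mul]
    _ ≤ ∫ u in Ioc a b, T u :=
        setIntegral_mono_on (integrableOn_const measure_Ioc_lt_top.ne) hi measurableSet_Ioc
          fun u hu => hT hu (right_mem_Ioc.2 (hu.1.trans_le hu.2)) hu.2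

theorem AntitoneOn.setIntegral_Ioc_le_sub_mul (hT : AntitoneOn T (Icc a b))
    (hi : IntegrableOn T (Ioc a b)) (hab : a ≤ b) : ∫ u in Ioc a b, T u ≤ (b - a) * T a := by
  calc ∫ u in Ioc a b, T u ≤ ∫ _ in Ioc a b, T a :=
        setIntegral_mono_on hi (integrableOn_const measure_Ioc_lt_top.ne) measurableSet_Ioc
          fun u hu => hT (left_mem_Icc.2 hab) (Ioc_subset_Icc_self hu) hu.1.le
    _ = (b - a) * T a := by
        rw [setIntegral_const, Real.volume_real_Ioc_of_le hab, smul_eq_mul]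

end AntitoneIntegral

section NearZero

variable {T : ℝ → ℝ} {x : ℝ}

theorem setIntegral_Ioc_zero_nonneg (hT : 0 ≤ T) (x : ℝ) : 0 ≤ ∫ u in Ioc 0 x, T u :=
  setIntegral_nonneg measurableSet_Ioc fun u _ => hT u

theorem mul_le_setIntegral_Ioc_zero (hT_anti : AntitoneOn T (Ioi 0))
    (hT_int : IntegrableOn T (Ioc 0 1)) (hx : 0 ≤ x) (hx1 : x ≤ 1) :
    x * T x ≤ ∫ u in Ioc 0 x, T u := by
  simpa using (hT_anti.mono Ioc_subset_Ioi_self).sub_mul_le_setIntegral_Ioc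
    (hT_int.mono_set (Ioc_subset_Ioc_right hx1)) hx

theorem setIntegral_Ioc_zero_two_mul (hT_int : IntegrableOn T (Ioc 0 1)) (hx : 0 ≤ x)
    (hx1 : 2 * x ≤ 1) :
    ∫ u in Ioc 0 (2 * x), T u = (∫ u in Ioc 0 x, T u) + ∫ u in Ioc x (2 * x), T u := by
  rw [← setIntegral_union (Ioc_disjoint_Ioc_of_le le_rfl) measurableSet_Ioc
    (hT_int.mono_set (Ioc_subset_Ioc_right (by linarith)))
    (hT_int.mono_set (Ioc_subset_Ioc hx hx1)), Ioc_union_Ioc_eq_Ioc hx (by linarith)]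

theorem setIntegral_Ioc_zero_two_mul_le (hT_anti : AntitoneOn T (Ioi 0))
    (hT_int : IntegrableOn T (Ioc 0 1)) (hx : 0 < x) (hx1 : 2 * x ≤ 1) :
    ∫ u in Ioc 0 (2 * x), T u ≤ (∫ u in Ioc 0 x, T u) + x * T x := by
  have := (hT_anti.mono fun u hu => hx.trans_le hu.1).setIntegral_Ioc_le_sub_mul
    (hT_int.mono_set (Ioc_subset_Ioc hx.le hx1)) (by linarith : x ≤ 2 * x)
  rw [setIntegral_Ioc_zero_two_mul hT_int hx.le hx1]
  linarith

theorem setIntegral_Ioc_zero_add_mul_le (hT_anti : AntitoneOn T (Ioi 0))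
    (hT_int : IntegrableOn T (Ioc 0 1)) (hx : 0 < x) (hx1 : 2 * x ≤ 1) :
    (∫ u in Ioc 0 x, T u) + x * T (2 * x) ≤ ∫ u in Ioc 0 (2 * x), T u := by
  have := (hT_anti.mono fun u hu => hx.trans hu.1).sub_mul_le_setIntegral_Ioc
    (hT_int.mono_set (Ioc_subset_Ioc hx.le hx1)) (by linarith : x ≤ 2 * x)
  rw [setIntegral_Ioc_zero_two_mul hT_int hx.le hx1]
  linarith

theorem doubling_ratio_le_one_add (hT_anti : AntitoneOn T (Ioi 0))
    (hT_int : IntegrableOn T (Ioc 0 1)) (hx : 0 < x) (hx1 : 2 * x ≤ 1)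
    (hI : 0 < ∫ u in Ioc 0 x, T u) :
    (∫ u in Ioc 0 (2 * x), T u) / (∫ u in Ioc 0 x, T u)
      ≤ 1 + x * T x / ∫ u in Ioc 0 x, T u := by
  rw [one_add_div hI.ne']
  gcongr
  linarith [setIntegral_Ioc_zero_two_mul_le hT_anti hT_int hx hx1]

theorem one_add_half_le_doubling_ratio (hT : 0 ≤ T) (hT_anti : AntitoneOn T (Ioi 0))
    (hT_int : IntegrableOn T (Ioc 0 1)) (hx : 0 < x) (hx1 : 2 * x ≤ 1)
    (hI : 0 < ∫ u in Ioc 0 x, T u) :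
    1 + 2 * x * T (2 * x) / (∫ u in Ioc 0 (2 * x), T u) / 2
      ≤ (∫ u in Ioc 0 (2 * x), T u) / ∫ u in Ioc 0 x, T u := by
  have hle := setIntegral_Ioc_zero_add_mul_le hT_anti hT_int hx hx1
  have hI2 : (∫ u in Ioc 0 x, T u) ≤ ∫ u in Ioc 0 (2 * x), T u := by
    linarith [mul_nonneg hx.le (hT (2 * x))]
  calc 1 + 2 * x * T (2 * x) / (∫ u in Ioc 0 (2 * x), T u) / 2
      = 1 + x * T (2 * x) / ∫ u in Ioc 0 (2 * x), T u := by ring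
    _ ≤ 1 + x * T (2 * x) / ∫ u in Ioc 0 x, T u := by
        gcongr
        exact mul_nonneg hx.le (hT _)
    _ ≤ (∫ u in Ioc 0 (2 * x), T u) / ∫ u in Ioc 0 x, T u := by
        rw [one_add_div hI.ne']
        gcongr

theorem eventually_mul_div_setIntegral_Ioc_zero_mem_Icc (hT : 0 ≤ T)
    (hT_anti : AntitoneOn T (Ioi 0)) (hT_int : IntegrableOn T (Ioc 0 1)) :
    ∀ᶠ x in 𝓝[>] 0, x * T x / (∫ u in Ioc 0 x, T u) ∈ Icc 0 1 := by
  filter_upwards [Ioc_mem_nhdsGT one_half_pos] with x ⟨hx, hx1⟩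
  exact ⟨div_nonneg (mul_nonneg hx.le (hT x)) (setIntegral_Ioc_zero_nonneg hT x),
    div_le_one_of_le₀ (mul_le_setIntegral_Ioc_zero hT_anti hT_int hx.le (by linarith))
      (setIntegral_Ioc_zero_nonneg hT x)⟩

theorem eventually_doubling_ratio_mem_Icc (hT : 0 ≤ T) (hT_anti : AntitoneOn T (Ioi 0))
    (hT_int : IntegrableOn T (Ioc 0 1)) :
    ∀ᶠ x in 𝓝[>] 0, (∫ u in Ioc 0 (2 * x), T u) / (∫ u in Ioc 0 x, T u) ∈ Icc 0 2 := by
  filter_upwards [Ioc_mem_nhdsGT one_half_pos,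
    eventually_mul_div_setIntegral_Ioc_zero_mem_Icc hT hT_anti hT_int] with x ⟨hx, hx1⟩ hf
  refine ⟨div_nonneg (setIntegral_Ioc_zero_nonneg hT _) (setIntegral_Ioc_zero_nonneg hT x), ?_⟩
  rcases (setIntegral_Ioc_zero_nonneg hT x).eq_or_lt with hI | hI
  · simp [← hI]
  · linarith [hf.2, doubling_ratio_le_one_add hT_anti hT_int hx (by linarith) hI]

theorem one_lt_liminf_doubling_ratio (hT : 0 ≤ T) (hT_anti : AntitoneOn T (Ioi 0))
    (hT_int : IntegrableOn T (Ioc 0 1))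
    (h : 0 < liminf (fun x => x * T x / ∫ u in Ioc 0 x, T u) (𝓝[>] 0)) :
    1 < liminf (fun x => (∫ u in Ioc 0 (2 * x), T u) / ∫ u in Ioc 0 x, T u) (𝓝[>] 0) := by
  set L := liminf (fun x => x * T x / ∫ u in Ioc 0 x, T u) (𝓝[>] 0)
  have hf := eventually_mul_div_setIntegral_Ioc_zero_mem_Icc hT hT_anti hT_int
  have hg := eventually_doubling_ratio_mem_Icc hT hT_anti hT_int
  have hL : ∀ᶠ x in 𝓝[>] 0, L / 2 < x * T x / ∫ u in Ioc 0 x, T u :=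
    eventually_lt_of_lt_liminf (by linarith)
      (isBoundedUnder_of_eventually_ge (hf.mono fun _ h => h.1))
  have hbound :
      ∀ᶠ x in 𝓝[>] 0, 1 + L / 4 ≤ (∫ u in Ioc 0 (2 * x), T u) / ∫ u in Ioc 0 x, T u := by
    filter_upwards [Ioc_mem_nhdsGT one_half_pos, hL, eventually_nhdsGT_zero_mul_left two_pos hL]
      with x ⟨hx, hx1⟩ hLx hL2x
    have hI : 0 < ∫ u in Ioc 0 x, T u := by
      refine (setIntegral_Ioc_zero_nonneg hT x).lt_of_ne' fun hI => ?_
      rw [hI, div_zero] at hLx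
      linarith
    linarith [one_add_half_le_doubling_ratio hT hT_anti hT_int hx (by linarith) hI]
  linarith [le_liminf_of_le
    (isCoboundedUnder_ge_of_eventually_le _ (hg.mono fun _ h => h.2)) hbound]

theorem pos_liminf_of_one_lt_liminf_doubling_ratio (hT : 0 ≤ T)
    (hT_anti : AntitoneOn T (Ioi 0)) (hT_int : IntegrableOn T (Ioc 0 1))
    (h : 1 < liminf (fun x => (∫ u in Ioc 0 (2 * x), T u) / ∫ u in Ioc 0 x, T u) (𝓝[>] 0)) :
    0 < liminf (fun x => x * T x / ∫ u in Ioc 0 x, T u) (𝓝[>] 0) := by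
  set M := liminf (fun x => (∫ u in Ioc 0 (2 * x), T u) / ∫ u in Ioc 0 x, T u) (𝓝[>] 0)
  have hf := eventually_mul_div_setIntegral_Ioc_zero_mem_Icc hT hT_anti hT_int
  have hg := eventually_doubling_ratio_mem_Icc hT hT_anti hT_int
  have hM :
      ∀ᶠ x in 𝓝[>] 0, (1 + M) / 2 < (∫ u in Ioc 0 (2 * x), T u) / ∫ u in Ioc 0 x, T u :=
    eventually_lt_of_lt_liminf (by linarith)
      (isBoundedUnder_of_eventually_ge (hg.mono fun _ h => h.1))
  have hbound : ∀ᶠ x in 𝓝[>] 0, (M - 1) / 2 ≤ x * T x / ∫ u in Ioc 0 x, T u := by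
    filter_upwards [Ioc_mem_nhdsGT one_half_pos, hM] with x ⟨hx, hx1⟩ hMx
    have hI : 0 < ∫ u in Ioc 0 x, T u := by
      refine (setIntegral_Ioc_zero_nonneg hT x).lt_of_ne' fun hI => ?_
      rw [hI, div_zero] at hMx
      linarith
    linarith [doubling_ratio_le_one_add hT_anti hT_int hx (by linarith) hI]
  linarith [le_liminf_of_le
    (isCoboundedUnder_ge_of_eventually_le _ (hf.mono fun _ h => h.2)) hbound]

theorem pos_liminf_mul_div_setIntegral_iff (hT : 0 ≤ T) (hT_anti : AntitoneOn T (Ioi 0))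
    (hT_int : IntegrableOn T (Ioc 0 1)) :
    0 < liminf (fun x => x * T x / ∫ u in Ioc 0 x, T u) (𝓝[>] 0) ↔
      1 < liminf (fun x => (∫ u in Ioc 0 (2 * x), T u) / ∫ u in Ioc 0 x, T u) (𝓝[>] 0) :=
  ⟨one_lt_liminf_doubling_ratio hT hT_anti hT_int,
    pos_liminf_of_one_lt_liminf_doubling_ratio hT hT_anti hT_int⟩

end NearZero

section TailOfLevyMeasure

variable {μ : Measure ℝ}

theorem antitone_measure_Ioi (μ : Measure ℝ) : Antitone fun u => μ (Ioi u) :=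
  fun _ _ hab => measure_mono (Ioi_subset_Ioi hab)

theorem measure_Ioi_ne_top_of_lintegral_min_ne_top
    (h : ∫⁻ x, ENNReal.ofReal (min 1 x) ∂μ ≠ ∞) {a : ℝ} (ha : 0 < a) : μ (Ioi a) ≠ ∞ := by
  have hε : ENNReal.ofReal (min 1 a) ≠ 0 := by simp [ha]
  refine ne_top_of_le_ne_top (ENNReal.div_ne_top h hε) ?_
  calc μ (Ioi a) ≤ μ {x | ENNReal.ofReal (min 1 a) ≤ ENNReal.ofReal (min 1 x)} :=
        measure_mono fun x hx => ENNReal.ofReal_le_ofReal (min_le_min_left _ (le_of_lt hx))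
    _ ≤ _ := meas_ge_le_lintegral_div (by fun_prop) hε ENNReal.ofReal_ne_top

-- Layer cake for `max 0 (min 1 x)`, which is nonnegative and has the same `ofReal` as `min 1 x`.
theorem setLIntegral_Ioc_measure_Ioi_le_lintegral_min :
    ∫⁻ u in Ioc 0 1, μ (Ioi u) ≤ ∫⁻ x, ENNReal.ofReal (min 1 x) ∂μ := by
  have hcake := lintegral_eq_lintegral_meas_le μ (f := fun x => max 0 (min 1 x))
    (ae_of_all _ fun _ => le_max_left _ _) (by fun_prop)
  simp only [ENNReal.ofReal_max, ENNReal.ofReal_zero, zero_max] at hcake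
  rw [hcake]
  calc ∫⁻ u in Ioc 0 1, μ (Ioi u)
      ≤ ∫⁻ u in Ioc 0 1, μ {x | u ≤ max 0 (min 1 x)} :=
        setLIntegral_mono' measurableSet_Ioc fun u hu =>
          measure_mono fun x hx => le_max_of_le_right (le_min hu.2 (le_of_lt hx))
    _ ≤ ∫⁻ u in Ioi 0, μ {x | u ≤ max 0 (min 1 x)} := lintegral_mono_set Ioc_subset_Ioi_self

theorem integrableOn_toReal_measure_Ioi (h : ∫⁻ x, ENNReal.ofReal (min 1 x) ∂μ ≠ ∞) :
    IntegrableOn (fun u => (μ (Ioi u)).toReal) (Ioc 0 1) :=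
  integrable_toReal_of_lintegral_ne_top (antitone_measure_Ioi μ).measurable.aemeasurable
    (ne_top_of_le_ne_top h setLIntegral_Ioc_measure_Ioi_le_lintegral_min)

theorem antitoneOn_toReal_measure_Ioi (h : ∫⁻ x, ENNReal.ofReal (min 1 x) ∂μ ≠ ∞) :
    AntitoneOn (fun u => (μ (Ioi u)).toReal) (Ioi 0) := fun _ ha _ _ hab =>
  ENNReal.toReal_mono (measure_Ioi_ne_top_of_lintegral_min_ne_top h ha)
    (antitone_measure_Ioi μ hab)

end TailOfLevyMeasure

theorem stmt2_general (Pim : Measure ℝ)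
    (hint : ∫⁻ x, ENNReal.ofReal (min 1 x) ∂Pim ≠ ∞) :
    (0 < liminf (fun x =>
        x * (Pim (Set.Ioi x)).toReal / ∫ u in Set.Ioc (0:ℝ) x, (Pim (Set.Ioi u)).toReal)
      (𝓝[>] (0:ℝ)))
    ↔ 1 < liminf (fun x =>
        (∫ u in Set.Ioc (0:ℝ) (2*x), (Pim (Set.Ioi u)).toReal)
          / ∫ u in Set.Ioc (0:ℝ) x, (Pim (Set.Ioi u)).toReal)
      (𝓝[>] (0:ℝ)) :=
  pos_liminf_mul_div_setIntegral_iff (fun _ => ENNReal.toReal_nonneg)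
    (antitoneOn_toReal_measure_Ioi hint) (integrableOn_toReal_measure_Ioi hint)

theorem stmt2 (Pim : Measure ℝ) (hsupp : ∀ᵐ x ∂Pim, 0 < x)
    (hint : ∫⁻ x, ENNReal.ofReal (min 1 x) ∂Pim ≠ ∞) :
    (0 < liminf (fun x =>
        x * (Pim (Set.Ioi x)).toReal / ∫ u in Set.Ioc (0:ℝ) x, (Pim (Set.Ioi u)).toReal)
      (𝓝[>] (0:ℝ)))
    ↔ 1 < liminf (fun x =>
        (∫ u in Set.Ioc (0:ℝ) (2*x), (Pim (Set.Ioi u)).toReal)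
          / ∫ u in Set.Ioc (0:ℝ) x, (Pim (Set.Ioi u)).toReal)
      (𝓝[>] (0:ℝ)) :=
  stmt2_general Pim hint
end

section
/- Let $-\xi$ be a subordinator with Laplace exponent $\phi$ and exponential functional $I=\int_0^\zeta e^{\xi_s}ds$, satisfying $\mathbb{E}[I^n]=\prod_{i=1}^n \frac{i}{\phi(i)}$ for all $n\ge 1$. If $\mathbb{E}[I^n]\le c^{-n}$ for all $n\ge 1$ for some $c>0$, and $\phi$ has drift $0$ (i.e. $\phi(\lambda)/\lambda = q/\lambda+\int_0^\infty e^{-\lambda x}\overline\Pi(x)dx \to 0$ as $\lambda\to\infty$), then a contradiction follows; hence the support of $I$ is bounded only if the drift of $-\xi$ is strictly positive. -/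
/-!
Zero drift means `φ(i)/i → 0`, so the factors `i/φ(i)` of the moment `𝔼[I^n] = ∏_{i ≤ n} i/φ(i)`
tend to infinity. Once they exceed `2/c`, each further factor at least doubles the ratio of the
product to `c^{-n}`, so no bound `𝔼[I^n] ≤ c^{-n}` can hold.
-/

open Filter
open scoped Topology

namespace Finset

theorem prod_Icc_mul_pow_le_prod_Icc_add {a : ℕ → ℝ} (hnonneg : ∀ i, 1 ≤ i → 0 ≤ a i)
    {b : ℝ} (hb : 0 ≤ b) {N : ℕ} (hN : ∀ i, N < i → b ≤ a i) (m : ℕ) :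
    (∏ i ∈ Icc 1 N, a i) * b ^ m ≤ ∏ i ∈ Icc 1 (N + m), a i := by
  induction m with
  | zero => simp
  | succ m ih =>
    have hprod : 0 ≤ ∏ i ∈ Icc 1 (N + m), a i :=
      prod_nonneg fun i hi => hnonneg i (mem_Icc.1 hi).1
    rw [← add_assoc, prod_Icc_succ_top (by omega), pow_succ, ← mul_assoc]
    exact mul_le_mul ih (hN _ (by omega)) hb hprod

theorem exists_pow_lt_prod_Icc_of_tendsto_atTop {a : ℕ → ℝ} (hpos : ∀ i, 1 ≤ i → 0 < a i)
    (ha : Tendsto a atTop atTop) {C : ℝ} (hC : 0 < C) :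
    ∃ n, 1 ≤ n ∧ C ^ n < ∏ i ∈ Icc 1 n, a i := by
  obtain ⟨N, hN⟩ := eventually_atTop.1 (ha.eventually_ge_atTop (2 * C))
  set K := ∏ i ∈ Icc 1 N, a i
  have hK : 0 < K := prod_pos fun i hi => hpos i (mem_Icc.1 hi).1
  obtain ⟨m, hm⟩ := pow_unbounded_of_one_lt (C ^ N / K) one_lt_two
  have hlt : C ^ (N + m) < ∏ i ∈ Icc 1 (N + m), a i :=
    calc C ^ (N + m) = C ^ N * C ^ m := pow_add C N m
      _ < K * 2 ^ m * C ^ m := by gcongr; rwa [div_lt_iff₀' hK] at hm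
      _ = K * (2 * C) ^ m := by ring
      _ ≤ ∏ i ∈ Icc 1 (N + m), a i :=
        prod_Icc_mul_pow_le_prod_Icc_add (fun i hi => (hpos i hi).le) (by positivity)
          (fun i hi => hN i hi.le) m
  refine ⟨N + m, Nat.one_le_iff_ne_zero.2 fun h0 => ?_, hlt⟩
  simp [h0] at hlt

end Finset

theorem stmt5_general (c : ℝ) (hc : 0 < c)
    (φ : ℝ → ℝ) (hφpos : ∀ lam > (0:ℝ), 0 < φ lam)
    (hlim : Tendsto (fun lam => φ lam / lam) atTop (𝓝 0))
    (hmom : ∀ n : ℕ, 1 ≤ n → (∏ i ∈ Finset.Icc 1 n, (i : ℝ) / φ i) ≤ (1/c) ^ n) :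
    False := by
  have hpos : ∀ i : ℕ, 1 ≤ i → 0 < (i : ℝ) / φ i := fun i hi =>
    have hi : (0 : ℝ) < i := by exact_mod_cast hi
    div_pos hi (hφpos i hi)
  have hratio : Tendsto (fun i : ℕ => (i : ℝ) / φ i) atTop atTop := by
    have hdrift : Tendsto (fun lam => φ lam / lam) atTop (𝓝[>] 0) :=
      tendsto_nhdsWithin_iff.2 ⟨hlim, (eventually_gt_atTop 0).mono fun lam hlam =>
        div_pos (hφpos lam hlam) hlam⟩
    exact (hdrift.comp tendsto_natCast_atTop_atTop).inv_tendsto_nhdsGT_zero.congr fun i =>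
      inv_div _ _
  obtain ⟨n, hn, hlt⟩ :=
    Finset.exists_pow_lt_prod_Icc_of_tendsto_atTop hpos hratio (one_div_pos.2 hc)
  exact (hmom n hn).not_gt hlt

theorem stmt5 (q c : ℝ) (hq : 0 ≤ q) (hc : 0 < c)
    (Pibar : ℝ → ℝ) (hPibar : ∀ x, 0 ≤ Pibar x)
    (φ : ℝ → ℝ) (hφpos : ∀ lam > (0:ℝ), 0 < φ lam)
    (hφ : ∀ lam > (0:ℝ),
      φ lam / lam = q / lam + ∫ x in Set.Ioi (0:ℝ), Real.exp (-lam * x) * Pibar x)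
    (hlim : Tendsto (fun lam => φ lam / lam) atTop (𝓝 0))
    (hmom : ∀ n : ℕ, 1 ≤ n → (∏ i ∈ Finset.Icc 1 n, (i : ℝ) / φ i) ≤ (1/c) ^ n) :
    False :=
  stmt5_general c hc φ hφpos hlim hmom
end

section
/- Let $-\xi$ be a subordinator with Laplace exponent $\phi$, drift $d>0$, killing rate $q\ge0$ and Lévy measure $\Pi$, and let $I=\int_0^\zeta e^{\xi_s}ds$. For $\gamma>0$, suppose there is a random variable $R_\gamma$ independent of $I$ with $R_\gamma I \overset{d}{=}\mathbf{B}_\gamma$ (Beta with density $\gamma(1-y)^{\gamma-1}$ on $(0,1)$). Then $\mathbb{E}[R_\gamma^n]=\prod_{i=1}^n \frac{\phi(i)}{i+\gamma}$ for all $n\ge 1$, the essential supremum of $R_\gamma$ equals $d$, and necessarily $\Pi(0,\infty)+q\le d\gamma$. -/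
/-!
Independence turns the moment identity `E[(R I)^n] = E[R^n] E[I^n]` into the moment formula for
`R`, since the Beta moments are `∏ i / (i + γ)`. Because `R I < 1` a.s. and `I` comes arbitrarily
close to `1/d` with positive probability, independence forces `R ≤ d` a.s.; conversely, if
`R ≤ a < d` a.s. then `R I ≤ a/d < 1` a.s., contradicting the Beta law, so `ess sup R = d`.
Finally `0 ≤ R ≤ d` makes `E[R^n] / d^n` nonincreasing, i.e. `φ(n) ≤ d (n + γ)`; letting
`n → ∞` in `φ(n) - d n = q + ∫ (1 - e^{-n x}) Π(dx)` gives `Π(0, ∞) + q ≤ d γ`.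
-/

open MeasureTheory ProbabilityTheory Filter Real Set
open scoped ENNReal Topology

lemma intervalIntegral_one_sub_rpow_mul_pow {γ : ℝ} (hγ : 0 < γ) (n : ℕ) :
    ∫ y in (0:ℝ)..1, (1 - y) ^ (γ - 1) * y ^ n
      = (n.factorial : ℝ) / ∏ j ∈ Finset.range (n + 1), (γ + j) := by
  have hβ := Complex.betaIntegral_eval_nat_add_one_right (u := γ) (by simpa using hγ) n
  have hreal : Complex.betaIntegral (n + 1) γ
      = ((∫ y in (0:ℝ)..1, (1 - y) ^ (γ - 1) * y ^ n : ℝ) : ℂ) := by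
    rw [Complex.betaIntegral, ← intervalIntegral.integral_ofReal]
    refine intervalIntegral.integral_congr fun y hy => ?_
    rw [uIcc_of_le zero_le_one] at hy
    have h1y : 0 ≤ 1 - y := by linarith [hy.2]
    simp only [Complex.ofReal_mul, Complex.ofReal_pow, add_sub_cancel_right,
      Complex.cpow_natCast, Complex.ofReal_cpow h1y, Complex.ofReal_sub, Complex.ofReal_one]
    ring
  rw [← Complex.betaIntegral_symm, hreal] at hβ
  exact_mod_cast hβ

lemma mul_factorial_div_prod_eq_prod_Icc {γ : ℝ} (hγ : 0 < γ) (n : ℕ) :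
    γ * ((n.factorial : ℝ) / ∏ j ∈ Finset.range (n + 1), (γ + j))
      = ∏ i ∈ Finset.Icc 1 n, (i : ℝ) / (i + γ) := by
  induction n with
  | zero => simp [hγ.ne']
  | succ n ih =>
    rw [Finset.prod_Icc_succ_top (by omega), ← ih, Finset.prod_range_succ, Nat.factorial_succ]
    have : ∀ j ∈ Finset.range (n + 1), γ + j ≠ 0 := fun j _ => by positivity
    have := Finset.prod_ne_zero_iff.mpr this
    push_cast
    field_simp
    ring

/-- The law of `𝐁_γ`, i.e. Beta(1, γ). -/
noncomputable def betaOneLaw (γ : ℝ) : Measure ℝ :=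
  (volume.restrict (Ioo (0:ℝ) 1)).withDensity (fun y => ENNReal.ofReal (γ * (1 - y) ^ (γ - 1)))

lemma ae_mem_Ioo_betaOneLaw (γ : ℝ) : ∀ᵐ y ∂betaOneLaw γ, y ∈ Ioo 0 1 := by
  rw [ae_iff, ← compl_def, betaOneLaw, withDensity_apply _ measurableSet_Ioo.compl,
    Measure.restrict_restrict measurableSet_Ioo.compl]
  simp

lemma betaOneLaw_Ioi_ne_zero {γ : ℝ} (hγ : 0 < γ) {b : ℝ} (hb : b < 1) :
    betaOneLaw γ (Ioi b) ≠ 0 := by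
  have hdens : Measurable fun y : ℝ => ENNReal.ofReal (γ * (1 - y) ^ (γ - 1)) := by fun_prop
  rw [betaOneLaw, withDensity_apply _ measurableSet_Ioi,
    Measure.restrict_restrict measurableSet_Ioi, ← pos_iff_ne_zero, lintegral_pos_iff_support hdens,
    Measure.restrict_apply (measurableSet_support hdens)]
  refine lt_of_lt_of_le ?_ (measure_mono (s := Ioo (max b 0) 1) fun y hy => ?_)
  · simpa [Real.volume_Ioo] using hb
  · have h1y : 0 < 1 - y := by linarith [hy.2]
    have hb0 := max_lt_iff.mp hy.1
    refine ⟨?_, hb0.1, hb0.2, hy.2⟩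
    simpa [Function.mem_support] using (by positivity : 0 < γ * (1 - y) ^ (γ - 1))

lemma integral_pow_betaOneLaw {γ : ℝ} (hγ : 0 < γ) (n : ℕ) :
    ∫ y, y ^ n ∂betaOneLaw γ = ∏ i ∈ Finset.Icc 1 n, (i : ℝ) / (i + γ) := by
  rw [betaOneLaw, integral_withDensity_eq_integral_toReal_smul (by fun_prop)
    (ae_of_all _ fun _ => ENNReal.ofReal_lt_top), ← mul_factorial_div_prod_eq_prod_Icc hγ,
    ← intervalIntegral_one_sub_rpow_mul_pow hγ, ← intervalIntegral.integral_const_mul,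
    intervalIntegral.integral_of_le zero_le_one, integral_Ioc_eq_integral_Ioo]
  refine setIntegral_congr_fun measurableSet_Ioo fun y hy => ?_
  have h1y : 0 < 1 - y := by linarith [hy.2]
  rw [ENNReal.toReal_ofReal (by positivity), smul_eq_mul, mul_assoc]

lemma integral_one_sub_exp_nonneg (ν : Measure ℝ) {lam : ℝ} (hlam : 0 ≤ lam) :
    0 ≤ ∫ x in Ioi (0:ℝ), (1 - exp (-lam * x)) ∂ν :=
  setIntegral_nonneg measurableSet_Ioi fun x (hx : 0 < x) => by
    simp only [sub_nonneg, exp_le_one_iff]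
    nlinarith

lemma tendsto_integral_one_sub_exp (ν : Measure ℝ) (hν : ν (Ioi 0) ≠ ∞) :
    Tendsto (fun n : ℕ => ∫ x in Ioi (0:ℝ), (1 - exp (-(n:ℝ) * x)) ∂ν) atTop
      (𝓝 (ν (Ioi 0)).toReal) := by
  have : IsFiniteMeasure (ν.restrict (Ioi 0)) := isFiniteMeasure_restrict.mpr hν
  rw [← measureReal_def, ← mul_one (ν.real _), ← smul_eq_mul, ← setIntegral_const]
  refine tendsto_integral_of_dominated_convergence (fun _ => 1) (fun n => by fun_prop)
    (integrable_const 1) (fun n => ?_) ?_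
  · filter_upwards [ae_restrict_mem measurableSet_Ioi] with x (hx : 0 < x)
    have : exp (-(n:ℝ) * x) ≤ 1 := exp_le_one_iff.mpr (by nlinarith)
    rw [Real.norm_of_nonneg (by linarith)]
    linarith [exp_pos (-(n:ℝ) * x)]
  · filter_upwards [ae_restrict_mem measurableSet_Ioi] with x (hx : 0 < x)
    have hexp : Tendsto (fun n : ℕ => exp (-(n:ℝ) * x)) atTop (𝓝 0) := by
      refine tendsto_exp_atBot.comp ?_
      simpa [neg_mul, ← mul_neg] using
        tendsto_natCast_atTop_atTop.atTop_mul_const_of_neg (neg_neg_of_pos hx)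
    simpa using hexp.const_sub 1

lemma measure_Ioi_toReal_le_of_integral_one_sub_exp_le (ν : Measure ℝ) {C : ℝ}
    (h : ∀ n : ℕ, 1 ≤ n → ∫ x in Ioi (0:ℝ), (1 - exp (-(n:ℝ) * x)) ∂ν ≤ C) :
    (ν (Ioi 0)).toReal ≤ C := by
  by_cases hν : ν (Ioi 0) = ∞
  · rw [hν, ENNReal.toReal_top]
    exact (integral_one_sub_exp_nonneg ν zero_le_one).trans (by simpa using h 1 le_rfl)
  · exact le_of_tendsto (tendsto_integral_one_sub_exp ν hν) (eventually_atTop.mpr ⟨1, h⟩)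

/-- The Laplace exponent `φ` of a subordinator with killing rate `q`, drift `d` and Lévy
measure `ν`. -/
noncomputable def laplaceExponent (q d : ℝ) (ν : Measure ℝ) (lam : ℝ) : ℝ :=
  q + d * lam + ∫ x in Ioi (0:ℝ), (1 - exp (-lam * x)) ∂ν

lemma laplaceExponent_pos {q d lam : ℝ} (ν : Measure ℝ) (hq : 0 ≤ q) (hd : 0 < d)
    (hlam : 0 < lam) : 0 < laplaceExponent q d ν lam := by
  have := integral_one_sub_exp_nonneg ν hlam.le
  unfold laplaceExponent
  positivity

lemma measure_Ioi_toReal_add_le_of_laplaceExponent_le {q d γ : ℝ} (ν : Measure ℝ)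
    (h : ∀ n : ℕ, 1 ≤ n → laplaceExponent q d ν n ≤ d * (n + γ)) :
    (ν (Ioi 0)).toReal + q ≤ d * γ := by
  have := measure_Ioi_toReal_le_of_integral_one_sub_exp_le ν (C := d * γ - q) fun n hn => by
    have := h n hn
    unfold laplaceExponent at this
    linarith
  linarith

section Probability

variable {Ω : Type*} [MeasurableSpace Ω] {μ : Measure Ω}

lemma ProbabilityTheory.IndepFun.integral_mul_pow {X Y : Ω → ℝ} (h : IndepFun X Y μ)
    (hX : AEStronglyMeasurable X μ) (hY : AEStronglyMeasurable Y μ) (n : ℕ) :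
    ∫ ω, (X ω * Y ω) ^ n ∂μ = (∫ ω, X ω ^ n ∂μ) * ∫ ω, Y ω ^ n ∂μ := by
  simp_rw [mul_pow]
  exact (h.comp (measurable_id.pow_const n) (measurable_id.pow_const n)
    ).integral_mul_eq_mul_integral (hX.pow n) (hY.pow n)

lemma integral_pow_eq_prod_div_of_indepFun [IsProbabilityMeasure μ] {X Y : Ω → ℝ}
    (hXY : IndepFun X Y μ) (hX : AEStronglyMeasurable X μ) (hY : AEStronglyMeasurable Y μ)
    {a b : ℕ → ℝ} (hb : ∀ i, 1 ≤ i → b i ≠ 0)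
    (hYmom : ∀ n, 1 ≤ n → ∫ ω, Y ω ^ n ∂μ = ∏ i ∈ Finset.Icc 1 n, b i)
    (hXYmom : ∀ n, ∫ ω, (X ω * Y ω) ^ n ∂μ = ∏ i ∈ Finset.Icc 1 n, a i) (n : ℕ) :
    ∫ ω, X ω ^ n ∂μ = ∏ i ∈ Finset.Icc 1 n, a i / b i := by
  rcases Nat.eq_zero_or_pos n with rfl | hn
  · simp
  have h := hXY.integral_mul_pow hX hY n
  rw [hXYmom, hYmom n hn, eq_comm, ← eq_div_iff, ← Finset.prod_div_distrib] at h
  · exact h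
  · exact Finset.prod_ne_zero_iff.mpr fun i hi => hb i (Finset.mem_Icc.mp hi).1

lemma measure_lt_eq_zero_of_indepFun_of_mul_lt_one {X Y : Ω → ℝ} (hXY : IndepFun X Y μ)
    (hlt : ∀ᵐ ω ∂μ, X ω * Y ω < 1) {a c : ℝ} (hc : 0 < c) (hca : 1 ≤ c * a)
    (hY : μ {ω | a < Y ω} ≠ 0) : μ {ω | c < X ω} = 0 := by
  have ha : 0 < a := pos_of_mul_pos_right (one_pos.trans_le hca) hc.le
  have hnull : μ ({ω | c < X ω} ∩ {ω | a < Y ω}) = 0 := by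
    refine measure_mono_null (fun ω ⟨hXc, hYa⟩ => ?_) (ae_iff.mp hlt)
    exact not_lt.mpr (hca.trans (mul_lt_mul'' hXc hYa hc.le ha.le).le)
  change μ (X ⁻¹' Ioi c ∩ Y ⁻¹' Ioi a) = 0 at hnull
  rw [hXY.measure_inter_preimage_eq_mul _ _ measurableSet_Ioi measurableSet_Ioi] at hnull
  exact (mul_eq_zero.mp hnull).resolve_right hY

lemma ae_le_of_forall_lt_measure_eq_zero {X : Ω → ℝ} {d : ℝ}
    (h : ∀ c, d < c → μ {ω | c < X ω} = 0) : ∀ᵐ ω ∂μ, X ω ≤ d := by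
  have hseq : ∀ᵐ ω ∂μ, ∀ n : ℕ, X ω ≤ d + 1 / (n + 1) :=
    ae_all_iff.mpr fun n => by
      simpa [ae_iff] using h _ (lt_add_of_pos_right d Nat.one_div_pos_of_nat)
  filter_upwards [hseq] with ω hω
  simpa using ge_of_tendsto' (tendsto_one_div_add_atTop_nhds_zero_nat.const_add d) hω

lemma ae_le_of_indepFun_of_mul_lt_one {X Y : Ω → ℝ} (hXY : IndepFun X Y μ)
    (hlt : ∀ᵐ ω ∂μ, X ω * Y ω < 1) {d : ℝ} (hd : 0 < d)
    (hY : ∀ ε > (0:ℝ), 0 < μ {ω | 1 / d - ε < Y ω}) : ∀ᵐ ω ∂μ, X ω ≤ d := by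
  refine ae_le_of_forall_lt_measure_eq_zero fun c hc =>
    measure_lt_eq_zero_of_indepFun_of_mul_lt_one hXY hlt (hd.trans hc) ?_
      (hY (1 / d - 1 / c) ?_).ne'
  · rw [sub_sub_cancel, mul_one_div_cancel (hd.trans hc).ne']
  · exact sub_pos.mpr (one_div_lt_one_div_of_lt hd hc)

lemma essSup_eq_of_ae_le_of_forall_lt {X : Ω → ℝ} {d : ℝ} (hle : ∀ᵐ ω ∂μ, X ω ≤ d)
    (hlt : ∀ a < d, μ {ω | a < X ω} ≠ 0) : essSup X μ = d := by
  have hd : μ {ω | d < X ω} = 0 := by simpa [ae_iff] using hle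
  have hbdd : ∀ a ∈ {a | μ {ω | a < X ω} = 0}, d ≤ a :=
    fun a ha => not_lt.mp fun h => hlt a h ha
  rw [essSup_eq_sInf]
  exact le_antisymm (csInf_le ⟨d, hbdd⟩ hd) (le_csInf ⟨d, hd⟩ hbdd)

lemma measure_lt_ne_zero_of_forall_measure_lt_mul_ne_zero {X Y : Ω → ℝ} {d : ℝ}
    (hd : 0 < d) (hY0 : 0 ≤ᵐ[μ] Y) (hY : ∀ᵐ ω ∂μ, Y ω ≤ 1 / d)
    (hXY : ∀ b < 1, μ {ω | b < X ω * Y ω} ≠ 0) {a : ℝ} (ha : a < d) :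
    μ {ω | a < X ω} ≠ 0 := by
  intro hXa_null
  have hXa : ∀ᵐ ω ∂μ, X ω ≤ a := by simpa [ae_iff] using hXa_null
  have hXY_le : ∀ᵐ ω ∂μ, X ω * Y ω ≤ max a 0 * (1 / d) := by
    filter_upwards [hXa.mono fun ω h => h.trans (le_max_left a 0), hY0, hY] with ω hX hY0 hY
    exact (mul_le_mul_of_nonneg_right hX hY0).trans
      (mul_le_mul_of_nonneg_left hY (le_max_right a 0))
  refine hXY (max a 0 * (1 / d)) ?_ (by simpa [ae_iff] using hXY_le)
  rw [mul_one_div, div_lt_one hd]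
  exact max_lt ha hd

lemma integral_pow_succ_le_mul [IsFiniteMeasure μ] {X : Ω → ℝ} {d : ℝ}
    (hX : AEStronglyMeasurable X μ) (h0 : 0 ≤ᵐ[μ] X) (hd : ∀ᵐ ω ∂μ, X ω ≤ d) (n : ℕ) :
    ∫ ω, X ω ^ (n + 1) ∂μ ≤ d * ∫ ω, X ω ^ n ∂μ := by
  have hint : ∀ k : ℕ, Integrable (fun ω => X ω ^ k) μ := fun k =>
    .of_bound (hX.pow k) (d ^ k) <| by
      filter_upwards [h0, hd] with ω h0 hd
      rw [norm_pow, Real.norm_of_nonneg h0]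
      exact pow_le_pow_left₀ h0 hd k
  rw [← integral_const_mul]
  refine integral_mono_ae (hint _) ((hint n).const_mul d) ?_
  filter_upwards [h0, hd] with ω h0 hd
  rw [pow_succ']
  exact mul_le_mul_of_nonneg_right hd (pow_nonneg h0 n)

lemma le_of_integral_pow_eq_prod_Icc [IsFiniteMeasure μ] {X : Ω → ℝ} {d : ℝ}
    (hX : AEStronglyMeasurable X μ) (h0 : 0 ≤ᵐ[μ] X) (hd : ∀ᵐ ω ∂μ, X ω ≤ d) {f : ℕ → ℝ}
    (hf : ∀ i, 1 ≤ i → 0 < f i) (hmom : ∀ n, ∫ ω, X ω ^ n ∂μ = ∏ i ∈ Finset.Icc 1 n, f i)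
    {n : ℕ} (hn : 1 ≤ n) : f n ≤ d := by
  obtain ⟨k, rfl⟩ := Nat.exists_eq_add_of_le' hn
  have h := integral_pow_succ_le_mul hX h0 hd k
  rw [hmom, hmom, Finset.prod_Icc_succ_top (by omega), mul_comm d] at h
  exact le_of_mul_le_mul_left h
    (Finset.prod_pos fun i hi => hf i (Finset.mem_Icc.mp hi).1)

end Probability

theorem stmt8_general {Ω : Type*} [MeasurableSpace Ω] (μ : Measure Ω) [IsProbabilityMeasure μ]
    (q d : ℝ) (hq : 0 ≤ q) (hd : 0 < d)
    (Pim : Measure ℝ)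
    (φ : ℝ → ℝ)
    (hφ : ∀ lam > (0:ℝ),
      φ lam = q + d * lam + ∫ x in Set.Ioi (0:ℝ), (1 - Real.exp (-lam * x)) ∂Pim)
    (I R : Ω → ℝ) (hI : Measurable I) (hR : Measurable R)
    (hInn : 0 ≤ᵐ[μ] I) (hRnn : 0 ≤ᵐ[μ] R)
    (hImom : ∀ n : ℕ, 1 ≤ n → ∫ ω, I ω ^ n ∂μ = ∏ i ∈ Finset.Icc 1 n, (i:ℝ) / φ i)
    (hIsupp : ∀ᵐ ω ∂μ, I ω ≤ 1 / d)
    (hIsupp' : ∀ ε > (0:ℝ), 0 < μ {ω | 1/d - ε < I ω})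
    (γ : ℝ) (hγ : 0 < γ)
    (hindep : IndepFun R I μ)
    (hlaw : Measure.map (fun ω => R ω * I ω) μ =
      (volume.restrict (Set.Ioo (0:ℝ) 1)).withDensity
        (fun y => ENNReal.ofReal (γ * (1 - y) ^ (γ - 1)))) :
    (∀ n : ℕ, 1 ≤ n → ∫ ω, R ω ^ n ∂μ = ∏ i ∈ Finset.Icc 1 n, φ i / ((i:ℝ) + γ))
    ∧ essSup R μ = d
    ∧ (Pim (Set.Ioi (0:ℝ))).toReal + q ≤ d * γ := by
  have hlaw : μ.map (fun ω => R ω * I ω) = betaOneLaw γ := hlaw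
  have hφn : ∀ i : ℕ, 1 ≤ i → φ i = laplaceExponent q d Pim i :=
    fun i hi => hφ i (by exact_mod_cast hi)
  have hφpos : ∀ i : ℕ, 1 ≤ i → 0 < φ i := fun i hi =>
    hφn i hi ▸ laplaceExponent_pos Pim hq hd (by exact_mod_cast hi)
  have hRI_lt : ∀ᵐ ω ∂μ, R ω * I ω < 1 :=
    (ae_of_ae_map (f := fun ω => R ω * I ω) (by fun_prop)
      (hlaw ▸ ae_mem_Ioo_betaOneLaw γ)).mono fun _ h => h.2
  have hRle : ∀ᵐ ω ∂μ, R ω ≤ d := ae_le_of_indepFun_of_mul_lt_one hindep hRI_lt hd hIsupp'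
  have hmom (n : ℕ) : ∫ ω, R ω ^ n ∂μ = ∏ i ∈ Finset.Icc 1 n, φ i / ((i:ℝ) + γ) := by
    rw [integral_pow_eq_prod_div_of_indepFun hindep hR.aestronglyMeasurable
      hI.aestronglyMeasurable (fun i hi => div_ne_zero (by positivity) (hφpos i hi).ne') hImom
      (fun n => by rw [← integral_pow_betaOneLaw hγ, ← hlaw,
        integral_map (by fun_prop) (continuous_pow n).aestronglyMeasurable])]
    refine Finset.prod_congr rfl fun i hi => ?_
    have hi : (i:ℝ) ≠ 0 := by have := (Finset.mem_Icc.mp hi).1; positivity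
    field_simp
  refine ⟨fun n _ => hmom n, ?_, ?_⟩
  · refine essSup_eq_of_ae_le_of_forall_lt hRle fun a ha =>
      measure_lt_ne_zero_of_forall_measure_lt_mul_ne_zero hd hInn hIsupp (fun b hb => ?_) ha
    change μ ((fun ω => R ω * I ω) ⁻¹' Ioi b) ≠ 0
    rw [← Measure.map_apply (by fun_prop) measurableSet_Ioi, hlaw]
    exact betaOneLaw_Ioi_ne_zero hγ hb
  · refine measure_Ioi_toReal_add_le_of_laplaceExponent_le Pim fun n hn => ?_
    rw [← hφn n hn, ← div_le_iff₀ (by positivity)]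
    exact le_of_integral_pow_eq_prod_Icc hR.aestronglyMeasurable hRnn hRle
      (fun i hi => div_pos (hφpos i hi) (by positivity)) hmom hn

theorem stmt8 {Ω : Type*} [MeasurableSpace Ω] (μ : Measure Ω) [IsProbabilityMeasure μ]
    (q d : ℝ) (hq : 0 ≤ q) (hd : 0 < d)
    (Pim : Measure ℝ) (hPimsupp : ∀ᵐ x ∂Pim, 0 < x)
    (φ : ℝ → ℝ)
    (hφ : ∀ lam > (0:ℝ),
      φ lam = q + d * lam + ∫ x in Set.Ioi (0:ℝ), (1 - Real.exp (-lam * x)) ∂Pim)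
    (I R : Ω → ℝ) (hI : Measurable I) (hR : Measurable R)
    (hInn : 0 ≤ᵐ[μ] I) (hRnn : 0 ≤ᵐ[μ] R)
    (hImom : ∀ n : ℕ, 1 ≤ n → ∫ ω, I ω ^ n ∂μ = ∏ i ∈ Finset.Icc 1 n, (i:ℝ) / φ i)
    (hIsupp : ∀ᵐ ω ∂μ, I ω ≤ 1 / d)
    (hIsupp' : ∀ ε > (0:ℝ), 0 < μ {ω | 1/d - ε < I ω})
    (γ : ℝ) (hγ : 0 < γ)
    (hindep : IndepFun R I μ)
    (hlaw : Measure.map (fun ω => R ω * I ω) μ =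
      (volume.restrict (Set.Ioo (0:ℝ) 1)).withDensity
        (fun y => ENNReal.ofReal (γ * (1 - y) ^ (γ - 1)))) :
    (∀ n : ℕ, 1 ≤ n → ∫ ω, R ω ^ n ∂μ = ∏ i ∈ Finset.Icc 1 n, φ i / ((i:ℝ) + γ))
    ∧ essSup R μ = d
    ∧ (Pim (Set.Ioi (0:ℝ))).toReal + q ≤ d * γ :=
  stmt8_general μ q d hq hd Pim φ hφ I R hI hR hInn hRnn hImom hIsupp hIsupp' γ hγ hindep hlaw
end

section
/- Let $-\xi$ be a subordinator with killing rate $q\ge0$, drift $d>0$ and finite Lévy measure $\Pi$, and let $k$ be the density of $I=\int_0^\zeta e^{\xi_s}ds$, which satisfies $(1/d - t)\,k(t)\,d = \int_0^\infty(\mathbb{P}(I>t)-\mathbb{P}(I>te^v))\Pi(dv)+q\,\mathbb{P}(I>t)$ for $t<1/d$. Then $(1/d - t)\,k(t)/\mathbb{P}(I>t) \to (\Pi(0,\infty)+q)/d$ as $t\uparrow 1/d$. -/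
open MeasureTheory Filter Real Set
open scoped ENNReal Topology

/-!
Writing `P t = ℙ(I > t)`, the identity divided by `d · P t` expresses the quotient as
`(∫ (1 - P (t eᵛ) / P t) dΠ(v) + q) / d`. Since `P` vanishes on `[1/d, ∞)`, for each fixed
`v > 0` the integrand equals `1` as soon as `t eᵛ ≥ 1/d`; it is bounded by `1` because `P` is
antitone, so dominated convergence against the finite measure `Π` gives the limit `Π(0, ∞)`.
-/

lemma antitone_measureReal_Ioi (ν : Measure ℝ) [IsFiniteMeasure ν] :
    Antitone fun t => ν.real (Ioi t) :=
  fun _ _ hst => measureReal_mono (Ioi_subset_Ioi hst)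

section TailRatio

variable {P : ℝ → ℝ} {c : ℝ}

lemma tendsto_sub_comp_mul_exp_div_self (hzero : ∀ t ≥ c, P t = 0)
    (hpos : ∀ t < c, 0 < P t) (hc : 0 < c) {v : ℝ} (hv : 0 < v) :
    Tendsto (fun t => (P t - P (t * exp v)) / P t) (𝓝[<] c) (𝓝 1) := by
  have hcv : c * exp (-v) < c := mul_lt_of_lt_one_right hc (exp_lt_one_iff.2 (neg_neg_of_pos hv))
  refine tendsto_const_nhds.congr' ?_
  filter_upwards [Ioo_mem_nhdsLT hcv] with t ⟨hlo, hhi⟩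
  have hexp : c ≤ t * exp v := by
    rw [← div_le_iff₀ (exp_pos v), div_eq_mul_inv, ← exp_neg]
    exact hlo.le
  rw [hzero _ hexp, sub_zero, div_self (hpos t hhi).ne']

lemma abs_sub_comp_mul_exp_div_self_le_one (hP : Antitone P) (hzero : ∀ t ≥ c, P t = 0)
    {t v : ℝ} (ht₀ : 0 ≤ t) (ht : 0 < P t) (hv : 0 ≤ v) :
    |(P t - P (t * exp v)) / P t| ≤ 1 := by
  have hnonneg : 0 ≤ P (t * exp v) :=
    (hzero _ (le_max_right _ c)).symm.le.trans (hP (le_max_left _ c))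
  have hle : P (t * exp v) ≤ P t := hP (le_mul_of_one_le_right ht₀ (one_le_exp hv))
  rw [abs_div, abs_of_pos ht, div_le_one ht, abs_le]
  constructor <;> linarith

lemma tendsto_setIntegral_sub_comp_mul_exp_div_self (μ : Measure ℝ) [IsFiniteMeasure μ]
    (hP : Antitone P) (hzero : ∀ t ≥ c, P t = 0) (hpos : ∀ t < c, 0 < P t) (hc : 0 < c) :
    Tendsto (fun t => (∫ v in Ioi 0, (P t - P (t * exp v)) ∂μ) / P t) (𝓝[<] c)
      (𝓝 (μ.real (Ioi 0))) := by
  have hlim := tendsto_integral_filter_of_dominated_convergence (μ := μ.restrict (Ioi 0))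
    (l := 𝓝[<] c) (F := fun t v => (P t - P (t * exp v)) / P t) (f := fun _ => 1)
    (fun _ => 1) ?meas ?bound (integrable_const 1) ?lim
  case meas =>
    refine Eventually.of_forall fun t => Measurable.aestronglyMeasurable ?_
    exact (measurable_const.sub (hP.measurable.comp (by fun_prop))).div_const _
  case bound =>
    filter_upwards [Ioo_mem_nhdsLT hc] with t ⟨ht₀, htc⟩
    filter_upwards [ae_restrict_mem measurableSet_Ioi] with v (hv : 0 < v)
    exact abs_sub_comp_mul_exp_div_self_le_one hP hzero ht₀.le (hpos t htc) hv.le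
  case lim =>
    filter_upwards [ae_restrict_mem measurableSet_Ioi] with v hv
    exact tendsto_sub_comp_mul_exp_div_self hzero hpos hc hv
  simpa only [integral_div, setIntegral_const, smul_eq_mul, mul_one] using hlim

end TailRatio

theorem stmt9_general (d q : ℝ) (hd : 0 < d)
    (Pim : Measure ℝ) [IsFiniteMeasure Pim]
    (ν : Measure ℝ) [IsProbabilityMeasure ν]
    (k : ℝ → ℝ)
    (hT0 : ∀ t ≥ 1/d, ν (Set.Ioi t) = 0)
    (hTpos : ∀ t < 1/d, 0 < (ν (Set.Ioi t)).toReal)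
    (heq : ∀ t ∈ Set.Ico (0:ℝ) (1/d),
      (1/d - t) * k t * d =
        (∫ v in Set.Ioi (0:ℝ),
          ((ν (Set.Ioi t)).toReal - (ν (Set.Ioi (t * Real.exp v))).toReal) ∂Pim)
        + q * (ν (Set.Ioi t)).toReal) :
    Tendsto (fun t => (1/d - t) * k t / (ν (Set.Ioi t)).toReal)
      (𝓝[<] (1/d)) (𝓝 (((Pim (Set.Ioi (0:ℝ))).toReal + q) / d)) := by
  have hR := tendsto_setIntegral_sub_comp_mul_exp_div_self Pim (antitone_measureReal_Ioi ν)
    (fun t ht => by simp [Measure.real, hT0 t ht]) hTpos (by positivity)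
  refine ((hR.add_const q).div_const d).congr' ?_
  filter_upwards [Ioo_mem_nhdsLT (one_div_pos.2 hd)] with t ⟨ht₀, htd⟩
  have hPt := (hTpos t htd).ne'
  rw [eq_div_iff hPt, ← mul_div_right_comm, div_eq_iff hd.ne', heq t ⟨ht₀.le, htd⟩]
  simp only [Measure.real]
  field_simp

theorem stmt9 (d q : ℝ) (hd : 0 < d) (hq : 0 ≤ q)
    (Pim : Measure ℝ) [IsFiniteMeasure Pim] (hsupp : ∀ᵐ x ∂Pim, 0 < x)
    (ν : Measure ℝ) [IsProbabilityMeasure ν]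
    (k : ℝ → ℝ)
    (hT0 : ∀ t ≥ 1/d, ν (Set.Ioi t) = 0)
    (hTpos : ∀ t < 1/d, 0 < (ν (Set.Ioi t)).toReal)
    (heq : ∀ t ∈ Set.Ico (0:ℝ) (1/d),
      (1/d - t) * k t * d =
        (∫ v in Set.Ioi (0:ℝ),
          ((ν (Set.Ioi t)).toReal - (ν (Set.Ioi (t * Real.exp v))).toReal) ∂Pim)
        + q * (ν (Set.Ioi t)).toReal) :
    Tendsto (fun t => (1/d - t) * k t / (ν (Set.Ioi t)).toReal)
      (𝓝[<] (1/d)) (𝓝 (((Pim (Set.Ioi (0:ℝ))).toReal + q) / d)) :=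
  stmt9_general d q hd Pim ν k hT0 hTpos heq
end

section
/- Let $I$ be a positive random variable with density $k$ satisfying $k(x)=\int_0^\infty(\mathbb{P}(I>x)-\mathbb{P}(I>xe^v))\Pi(dv)+q\,\mathbb{P}(I>x)$ for all $x>0$, where $\Pi$ is a Lévy measure of a subordinator with Laplace exponent $\phi$, $\phi(1)>0$. Then with $g(x)=-\ln\int_x^\infty \mathbb{P}(I>u)du$, one has $g'(x)\ge \phi(1)$ for all $x$, and consequently $\mathbb{P}(I>cx)/\mathbb{P}(I>x)\le \frac{1}{x(c-1)\phi(1)}$ for every $c>1$ and $x>0$; in particular $x\mapsto\mathbb{P}(I>x)$ is rapidly varying: $\mathbb{P}(I>cx)/\mathbb{P}(I>x)\to 0$ as $x\to\infty$ for every $c>1$. -/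
open MeasureTheory Filter Real Set
open scoped ENNReal Topology

/-!
Write `T u = ν (Ioi u)` and `F y = ∫_{(y,∞)} T`. Integrating the density equation over `(y, ∞)`
and exchanging the order of integration gives
`T y ≥ ∫ Π(dv) ∫_{(y,∞)} (T x - T (x e^v)) dx + q F y`, and the substitution `x ↦ x e^v` turns
the inner integral into `F y - e^{-v} F (y e^v) ≥ (1 - e^{-v}) F y`. Hence `φ(1) F ≤ T = -F'`,
which is the bound on `g' = T / F`. Monotonicity of `T` gives `x (c - 1) T (c x) ≤ F x`, hence
the ratio bound, which in turn gives rapid variation.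

The exchange of integrals needs `Π` on `(0, ∞)` to be σ-finite, which follows from
`∫ (1 - e^{-v}) Π(dv) < ∞`; the matching upper bound `(1 - e^{-v}) (F y + y T y)` on the inner
integral makes the Bochner integrals in the density equation finite a.e. When
`∫ (1 - e^{-v}) Π(dv)` diverges its Bochner value is `0`, and only the killing term `q F` is needed.
-/

section TailIntegral

variable {f : ℝ → ℝ} {a b : ℝ}

theorem Antitone.sub_mul_le_integral_Ioi_sub (hf : Antitone f) (hfi : IntegrableOn f (Ioi a))
    (hab : a ≤ b) : (b - a) * f b ≤ (∫ u in Ioi a, f u) - ∫ u in Ioi b, f u := by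
  rw [intervalIntegral.integral_Ioi_sub_Ioi hfi hab, ← smul_eq_mul,
    ← intervalIntegral.integral_const]
  exact intervalIntegral.integral_mono_on hab intervalIntegrable_const hf.intervalIntegrable
    fun u hu => hf hu.2

theorem Antitone.integral_Ioi_sub_le_sub_mul (hf : Antitone f) (hfi : IntegrableOn f (Ioi a))
    (hab : a ≤ b) : (∫ u in Ioi a, f u) - ∫ u in Ioi b, f u ≤ (b - a) * f a := by
  rw [intervalIntegral.integral_Ioi_sub_Ioi hfi hab, ← smul_eq_mul,
    ← intervalIntegral.integral_const]
  exact intervalIntegral.integral_mono_on hab hf.intervalIntegrable intervalIntegrable_const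
    fun u hu => hf hu.1

theorem MeasureTheory.IntegrableOn.comp_mul_right_Ioi_of_one_le (hfi : IntegrableOn f (Ioi a))
    (ha : 0 ≤ a) (hb : 1 ≤ b) : IntegrableOn (fun x => f (x * b)) (Ioi a) :=
  (integrableOn_Ioi_comp_mul_right_iff f a (by linarith)).2
    (hfi.mono_set (Ioi_subset_Ioi (le_mul_of_one_le_right ha hb)))

theorem integral_Ioi_sub_comp_mul (hfi : IntegrableOn f (Ioi a)) (ha : 0 ≤ a) (hb : 1 ≤ b) :
    ∫ x in Ioi a, (f x - f (x * b)) = (∫ u in Ioi a, f u) - b⁻¹ * ∫ u in Ioi (a * b), f u := by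
  rw [integral_sub hfi (hfi.comp_mul_right_Ioi_of_one_le ha hb),
    integral_comp_mul_right_Ioi f a (by linarith), smul_eq_mul]

theorem Antitone.integral_Ioi_sub_comp_mul_mem_Icc (hf : Antitone f) (hf0 : ∀ u, 0 ≤ f u)
    (hfi : IntegrableOn f (Ioi a)) (ha : 0 ≤ a) (hb : 1 ≤ b) :
    ∫ x in Ioi a, (f x - f (x * b)) ∈ Icc ((1 - b⁻¹) * ∫ u in Ioi a, f u)
      ((1 - b⁻¹) * ((∫ u in Ioi a, f u) + a * f a)) := by
  have hab : a ≤ a * b := le_mul_of_one_le_right ha hb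
  have hlow := hf.sub_mul_le_integral_Ioi_sub hfi hab
  have hup := hf.integral_Ioi_sub_le_sub_mul hfi hab
  have hbinv : 0 ≤ b⁻¹ := by positivity
  have hdiff : 0 ≤ (∫ u in Ioi a, f u) - ∫ u in Ioi (a * b), f u :=
    (mul_nonneg (sub_nonneg.2 hab) (hf0 _)).trans hlow
  have hscale : b⁻¹ * ((a * b - a) * f a) = (1 - b⁻¹) * (a * f a) := by
    field_simp
  rw [integral_Ioi_sub_comp_mul hfi ha hb]
  constructor
  · nlinarith [mul_nonneg hbinv hdiff]
  · nlinarith [mul_le_mul_of_nonneg_left hup hbinv]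

end TailIntegral

theorem sigmaFinite_of_integrable_of_pos {α : Type*} [MeasurableSpace α] {μ : Measure α}
    {f : α → ℝ} (hfi : Integrable f μ) (hpos : ∀ᵐ x ∂μ, 0 < f x) : SigmaFinite μ := by
  have hg := hfi.aemeasurable.ennreal_ofReal
  have hg0 : ∀ᵐ x ∂μ, ENNReal.ofReal (f x) ≠ 0 :=
    hpos.mono fun x hx => (ENNReal.ofReal_pos.2 hx).ne'
  have := isFiniteMeasure_withDensity_ofReal hfi.2
  have : SigmaFinite ((μ.withDensity fun x => ENNReal.ofReal (f x)).withDensity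
      fun x => (ENNReal.ofReal (f x))⁻¹) :=
    SigmaFinite.withDensity_of_ne_top ((withDensity_absolutelyContinuous μ _).ae_le
      (hg0.mono fun x hx => ENNReal.inv_ne_top.2 hx))
  rwa [withDensity_inv_same₀ hg hg0 (ae_of_all _ fun _ => ENNReal.ofReal_ne_top)] at this

theorem ae_ofReal_integral_eq_lintegral {α β : Type*} [MeasurableSpace α] [MeasurableSpace β]
    {μ : Measure α} {ν : Measure β} [SFinite ν] {g : α → β → ℝ}
    (hg : Measurable (Function.uncurry g)) (hg0 : ∀ᵐ x ∂μ, ∀ᵐ v ∂ν, 0 ≤ g x v)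
    (hfin : ∫⁻ x, ∫⁻ v, ENNReal.ofReal (g x v) ∂ν ∂μ ≠ ∞) :
    ∀ᵐ x ∂μ, ENNReal.ofReal (∫ v, g x v ∂ν) = ∫⁻ v, ENNReal.ofReal (g x v) ∂ν := by
  filter_upwards [ae_lt_top hg.ennreal_ofReal.lintegral_prod_right' hfin, hg0] with x hx hx0
  rw [integral_eq_lintegral_of_nonneg_ae hx0 (hg.comp measurable_prodMk_left).aestronglyMeasurable]
  exact ENNReal.ofReal_toReal hx.ne

section Generator

variable {T : ℝ → ℝ} {y : ℝ}

theorem Antitone.lintegral_ofReal_sub_comp_mul_exp_mem_Icc (hT : Antitone T) (hT0 : ∀ u, 0 ≤ T u)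
    (hTi : IntegrableOn T (Ioi y)) (hy : 0 ≤ y) {v : ℝ} (hv : 0 ≤ v) :
    ∫⁻ x in Ioi y, ENNReal.ofReal (T x - T (x * exp v)) ∈
      Icc (ENNReal.ofReal ((1 - exp (-v)) * ∫ u in Ioi y, T u))
        (ENNReal.ofReal ((1 - exp (-v)) * ((∫ u in Ioi y, T u) + y * T y))) := by
  have hmem := hT.integral_Ioi_sub_comp_mul_mem_Icc hT0 hTi hy (one_le_exp hv)
  rw [← exp_neg] at hmem
  rw [← ofReal_integral_eq_lintegral_ofReal (f := fun x => T x - T (x * exp v))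
    (hTi.sub (hTi.comp_mul_right_Ioi_of_one_le hy (one_le_exp hv)))
    ((ae_restrict_mem measurableSet_Ioi).mono fun x hx =>
      sub_nonneg.2 (hT (le_mul_of_one_le_right (hy.trans hx.out.le) (one_le_exp hv))))]
  exact ⟨ENNReal.ofReal_le_ofReal hmem.1, ENNReal.ofReal_le_ofReal hmem.2⟩

theorem Antitone.ofReal_mul_le_lintegral_integral_sub_comp_mul_exp (hT : Antitone T)
    (hT0 : ∀ u, 0 ≤ T u) (hTi : IntegrableOn T (Ioi y)) (hy : 0 ≤ y) (μ : Measure ℝ) :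
    ENNReal.ofReal ((∫ v in Ioi 0, (1 - exp (-v)) ∂μ) * ∫ u in Ioi y, T u) ≤
      ∫⁻ x in Ioi y, ENNReal.ofReal (∫ v in Ioi 0, (T x - T (x * exp v)) ∂μ) := by
  set F := ∫ u in Ioi y, T u
  set μ₀ := μ.restrict (Ioi 0)
  by_cases hint : Integrable (fun v => 1 - exp (-v)) μ₀
  swap
  · simp [μ₀, integral_undef hint]
  have hpos : ∀ᵐ v ∂μ₀, 0 < 1 - exp (-v) := by
    filter_upwards [ae_restrict_mem measurableSet_Ioi] with v hv
    simpa using hv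
  have := sigmaFinite_of_integrable_of_pos hint hpos
  set W : ℝ → ℝ → ℝ := fun x v => T x - T (x * exp v)
  have hW : Measurable (Function.uncurry W) :=
    (hT.measurable.comp measurable_fst).sub
      (hT.measurable.comp (measurable_fst.mul (measurable_exp.comp measurable_snd)))
  have hslice : ∀ᵐ v ∂μ₀, ∫⁻ x in Ioi y, ENNReal.ofReal (W x v) ∈
      Icc (ENNReal.ofReal ((1 - exp (-v)) * F))
        (ENNReal.ofReal ((1 - exp (-v)) * (F + y * T y))) :=
    (ae_restrict_mem measurableSet_Ioi).mono fun v hv =>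
      hT.lintegral_ofReal_sub_comp_mul_exp_mem_Icc hT0 hTi hy hv.out.le
  have hswap := lintegral_lintegral_swap (μ := volume.restrict (Ioi y)) (ν := μ₀)
    (f := fun x v => ENNReal.ofReal (W x v)) hW.ennreal_ofReal.aemeasurable
  have hfin : ∫⁻ x in Ioi y, ∫⁻ v, ENNReal.ofReal (W x v) ∂μ₀ ≠ ∞ := by
    have hbound : ∫⁻ v, ENNReal.ofReal ((1 - exp (-v)) * (F + y * T y)) ∂μ₀ ≠ ∞ :=
      (hint.mul_const _).lintegral_lt_top.ne
    rw [hswap]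
    exact ne_top_of_le_ne_top hbound (lintegral_mono_ae (hslice.mono fun v hv => hv.2))
  have hae := ae_ofReal_integral_eq_lintegral hW
    ((ae_restrict_mem measurableSet_Ioi).mono fun x hx =>
      (ae_restrict_mem measurableSet_Ioi).mono fun v hv =>
        sub_nonneg.2 (hT (le_mul_of_one_le_right (hy.trans hx.out.le) (one_le_exp hv.out.le))))
    hfin
  calc ENNReal.ofReal ((∫ v, (1 - exp (-v)) ∂μ₀) * F)
      = ∫⁻ v, ENNReal.ofReal ((1 - exp (-v)) * F) ∂μ₀ := by
        rw [← integral_mul_const, ofReal_integral_eq_lintegral_ofReal (hint.mul_const F)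
          (hpos.mono fun v hv => mul_nonneg hv.le (setIntegral_nonneg measurableSet_Ioi
            fun u _ => hT0 u))]
    _ ≤ ∫⁻ v, (∫⁻ x in Ioi y, ENNReal.ofReal (W x v)) ∂μ₀ :=
        lintegral_mono_ae (hslice.mono fun v hv => hv.1)
    _ = ∫⁻ x in Ioi y, ∫⁻ v, ENNReal.ofReal (W x v) ∂μ₀ := hswap.symm
    _ = ∫⁻ x in Ioi y, ENNReal.ofReal (∫ v, W x v ∂μ₀) :=
        lintegral_congr_ae (hae.mono fun x hx => hx.symm)

theorem Antitone.ofReal_mul_integral_Ioi_le_lintegral_of_density_eq (hT : Antitone T)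
    (hT0 : ∀ u, 0 ≤ T u) (hTi : IntegrableOn T (Ioi y)) (hy : 0 ≤ y) {μ : Measure ℝ} {q : ℝ}
    (hq : 0 ≤ q) {k : ℝ → ℝ}
    (hk : ∀ x > y, k x = (∫ v in Ioi 0, (T x - T (x * exp v)) ∂μ) + q * T x) :
    ENNReal.ofReal (((∫ v in Ioi 0, (1 - exp (-v)) ∂μ) + q) * ∫ u in Ioi y, T u) ≤
      ∫⁻ x in Ioi y, ENNReal.ofReal (k x) := by
  have hF0 : 0 ≤ ∫ u in Ioi y, T u := setIntegral_nonneg measurableSet_Ioi fun u _ => hT0 u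
  have hA0 : 0 ≤ ∫ v in Ioi 0, (1 - exp (-v)) ∂μ :=
    setIntegral_nonneg measurableSet_Ioi fun v hv => by simpa using hv.out.le
  have hjump0 : ∀ x > y, 0 ≤ ∫ v in Ioi 0, (T x - T (x * exp v)) ∂μ := fun x hx =>
    setIntegral_nonneg measurableSet_Ioi fun v hv =>
      sub_nonneg.2 (hT (le_mul_of_one_le_right (hy.trans hx.le) (one_le_exp hv.out.le)))
  have hdrift : ENNReal.ofReal (q * ∫ u in Ioi y, T u) =
      ∫⁻ x in Ioi y, ENNReal.ofReal (q * T x) := by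
    rw [← integral_const_mul, ofReal_integral_eq_lintegral_ofReal (hTi.const_mul q)
      (ae_of_all _ fun x => mul_nonneg hq (hT0 x))]
  calc ENNReal.ofReal (((∫ v in Ioi 0, (1 - exp (-v)) ∂μ) + q) * ∫ u in Ioi y, T u)
      = ENNReal.ofReal ((∫ v in Ioi 0, (1 - exp (-v)) ∂μ) * ∫ u in Ioi y, T u) +
          ENNReal.ofReal (q * ∫ u in Ioi y, T u) := by
        rw [add_mul, ENNReal.ofReal_add (mul_nonneg hA0 hF0) (mul_nonneg hq hF0)]
    _ ≤ (∫⁻ x in Ioi y, ENNReal.ofReal (∫ v in Ioi 0, (T x - T (x * exp v)) ∂μ)) +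
          ∫⁻ x in Ioi y, ENNReal.ofReal (q * T x) :=
        add_le_add (hT.ofReal_mul_le_lintegral_integral_sub_comp_mul_exp hT0 hTi hy μ)
          hdrift.le
    _ ≤ ∫⁻ x in Ioi y, (ENNReal.ofReal (∫ v in Ioi 0, (T x - T (x * exp v)) ∂μ) +
          ENNReal.ofReal (q * T x)) := le_lintegral_add _ _
    _ = ∫⁻ x in Ioi y, ENNReal.ofReal (k x) :=
        setLIntegral_congr_fun measurableSet_Ioi fun x hx => by
          rw [hk x hx, ENNReal.ofReal_add (hjump0 x hx) (mul_nonneg hq (hT0 x))]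

end Generator

theorem continuous_measureReal_Ioi (μ : Measure ℝ) [IsFiniteMeasure μ] [NullSingletonClass μ] :
    Continuous fun u => μ.real (Ioi u) := by
  refine continuous_iff_continuousAt.2 fun a => ?_
  have h := ((integrable_const (μ := μ) (1 : ℝ)).integrableOn (s := Ioi (a - 1))
    ).continuousOn_Ici_primitive_Ioi
  simpa using h.continuousAt (Ici_mem_nhds (sub_one_lt a))

theorem hasDerivAt_integral_Ioi {E : Type*} [NormedAddCommGroup E] [NormedSpace ℝ E]
    [CompleteSpace E] {f : ℝ → E} {a x : ℝ} (hfi : IntegrableOn f (Ioi a)) (hax : a < x)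
    (hf : ContinuousAt f x) : HasDerivAt (fun y => ∫ u in Ioi y, f u) (-f x) x := by
  have hprim : HasDerivAt (fun y => ∫ u in a..y, f u) (f x) x :=
    intervalIntegral.integral_hasDerivAt_right
      ((intervalIntegrable_iff_integrableOn_Ioc_of_le hax.le).2 (hfi.mono_set Ioc_subset_Ioi_self))
      (AEStronglyMeasurable.stronglyMeasurableAtFilter_of_mem hfi.aestronglyMeasurable
        (Ioi_mem_nhds hax)) hf
  refine (hprim.const_sub (∫ u in Ioi a, f u)).congr_of_eventuallyEq ?_
  filter_upwards [Ioi_mem_nhds hax] with y hy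
  rw [← intervalIntegral.integral_Ioi_sub_Ioi hfi hy.out.le, sub_sub_cancel]

section Ratio

variable {T : ℝ → ℝ} {a b : ℝ}

theorem Antitone.integral_Ioi_pos (hT : Antitone T) (hT0 : ∀ u, 0 ≤ T u)
    (hTi : IntegrableOn T (Ioi a)) (hab : a < b) (hb : 0 < T b) : 0 < ∫ u in Ioi a, T u := by
  have h := hT.sub_mul_le_integral_Ioi_sub hTi hab.le
  have := setIntegral_nonneg (μ := volume) (measurableSet_Ioi (a := b)) fun u _ => hT0 u
  nlinarith [mul_pos (sub_pos.2 hab) hb]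

theorem Antitone.div_le_of_mul_integral_Ioi_le (hT : Antitone T) (hT0 : ∀ u, 0 ≤ T u)
    {x c φ : ℝ} (hTi : IntegrableOn T (Ioi x)) (hx : 0 < x) (hc : 1 < c) (hTx : 0 < T x)
    (hφ : 0 < φ) (hkey : φ * ∫ u in Ioi x, T u ≤ T x) :
    T (c * x) / T x ≤ 1 / (x * (c - 1) * φ) := by
  have h := hT.sub_mul_le_integral_Ioi_sub hTi (le_mul_of_one_le_left hx.le hc.le)
  have := setIntegral_nonneg (μ := volume) (measurableSet_Ioi (a := c * x)) fun u _ => hT0 u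
  rw [div_le_div_iff₀ hTx (by have := sub_pos.2 hc; positivity)]
  nlinarith [mul_le_mul_of_nonneg_left h hφ.le]

end Ratio

theorem stmt10_general (q : ℝ) (hq : 0 ≤ q)
    (Pim : Measure ℝ)
    (ν : Measure ℝ) [IsProbabilityMeasure ν]
    (k : ℝ → ℝ) (hk : ν = volume.withDensity fun x => ENNReal.ofReal (k x))
    (heq : ∀ x > (0:ℝ), k x =
      (∫ v in Set.Ioi (0:ℝ),
        ((ν (Set.Ioi x)).toReal - (ν (Set.Ioi (x * Real.exp v))).toReal) ∂Pim)
      + q * (ν (Set.Ioi x)).toReal)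
    (hTint : IntegrableOn (fun u => (ν (Set.Ioi u)).toReal) (Set.Ioi 0))
    (hTpos : ∀ x > (0:ℝ), 0 < (ν (Set.Ioi x)).toReal)
    (φ1 : ℝ) (hφ1 : φ1 = (∫ v in Set.Ioi (0:ℝ), (1 - Real.exp (-v)) ∂Pim) + q)
    (hφ1pos : 0 < φ1) :
    (∀ x > (0:ℝ),
        φ1 ≤ deriv (fun y => -Real.log (∫ u in Set.Ioi y, (ν (Set.Ioi u)).toReal)) x)
    ∧ (∀ c > (1:ℝ), ∀ x > (0:ℝ),
        (ν (Set.Ioi (c*x))).toReal / (ν (Set.Ioi x)).toReal ≤ 1 / (x * (c-1) * φ1))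
    ∧ ∀ c > (1:ℝ),
        Tendsto (fun x => (ν (Set.Ioi (c*x))).toReal / (ν (Set.Ioi x)).toReal)
          atTop (𝓝 0) := by
  set T : ℝ → ℝ := fun u => (ν (Ioi u)).toReal
  have hT : Antitone T := fun a b hab =>
    ENNReal.toReal_mono (measure_ne_top ν _) (measure_mono (Ioi_subset_Ioi hab))
  have hT0 : ∀ u, 0 ≤ T u := fun _ => ENNReal.toReal_nonneg
  have hTi : ∀ y ≥ 0, IntegrableOn T (Ioi y) := fun y hy => hTint.mono_set (Ioi_subset_Ioi hy)
  have hkey : ∀ y > 0, φ1 * ∫ u in Ioi y, T u ≤ T y := fun y hy => by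
    have h := hT.ofReal_mul_integral_Ioi_le_lintegral_of_density_eq hT0 (hTi y hy.le) hy.le hq
      fun x hx => heq x (hy.trans hx)
    rw [← hφ1, ← withDensity_apply _ measurableSet_Ioi, ← hk] at h
    exact (ENNReal.ofReal_le_iff_le_toReal (measure_ne_top ν _)).1 h
  have hFpos : ∀ x > 0, 0 < ∫ u in Ioi x, T u := fun x hx =>
    hT.integral_Ioi_pos hT0 (hTi x hx.le) (lt_add_one x) (hTpos _ (by linarith))
  have hratio : ∀ c > 1, ∀ x > 0, T (c * x) / T x ≤ 1 / (x * (c - 1) * φ1) := fun c hc x hx =>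
    hT.div_le_of_mul_integral_Ioi_le hT0 (hTi x hx.le) hx hc (hTpos x hx) hφ1pos (hkey x hx)
  refine ⟨fun x hx => ?_, hratio, fun c hc => ?_⟩
  · have : NullSingletonClass ν := hk ▸ inferInstance
    have hd : HasDerivAt (fun y => -log (∫ u in Ioi y, T u)) _ x :=
      ((hasDerivAt_integral_Ioi hTint hx (continuous_measureReal_Ioi ν).continuousAt).log
        (hFpos x hx).ne').neg
    rw [hd.deriv, neg_div, neg_neg, le_div_iff₀ (hFpos x hx)]
    exact hkey x hx
  · refine squeeze_zero' (Eventually.of_forall fun x => div_nonneg (hT0 _) (hT0 _))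
      ((eventually_gt_atTop 0).mono (hratio c hc)) (tendsto_const_nhds.div_atTop ?_)
    exact (tendsto_id.atTop_mul_const (sub_pos.2 hc)).atTop_mul_const hφ1pos

theorem stmt10 (q : ℝ) (hq : 0 ≤ q)
    (Pim : Measure ℝ) (hsupp : ∀ᵐ x ∂Pim, 0 < x) (hne : Pim (Set.Ioi (0:ℝ)) ≠ 0)
    (ν : Measure ℝ) [IsProbabilityMeasure ν]
    (k : ℝ → ℝ) (hk : ν = volume.withDensity fun x => ENNReal.ofReal (k x))
    (heq : ∀ x > (0:ℝ), k x =
      (∫ v in Set.Ioi (0:ℝ),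
        ((ν (Set.Ioi x)).toReal - (ν (Set.Ioi (x * Real.exp v))).toReal) ∂Pim)
      + q * (ν (Set.Ioi x)).toReal)
    (hTint : IntegrableOn (fun u => (ν (Set.Ioi u)).toReal) (Set.Ioi 0))
    (hTpos : ∀ x > (0:ℝ), 0 < (ν (Set.Ioi x)).toReal)
    (φ1 : ℝ) (hφ1 : φ1 = (∫ v in Set.Ioi (0:ℝ), (1 - Real.exp (-v)) ∂Pim) + q)
    (hφ1pos : 0 < φ1) :
    (∀ x > (0:ℝ),
        φ1 ≤ deriv (fun y => -Real.log (∫ u in Set.Ioi y, (ν (Set.Ioi u)).toReal)) x)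
    ∧ (∀ c > (1:ℝ), ∀ x > (0:ℝ),
        (ν (Set.Ioi (c*x))).toReal / (ν (Set.Ioi x)).toReal ≤ 1 / (x * (c-1) * φ1))
    ∧ ∀ c > (1:ℝ),
        Tendsto (fun x => (ν (Set.Ioi (c*x))).toReal / (ν (Set.Ioi x)).toReal)
          atTop (𝓝 0) :=
  stmt10_general q hq Pim ν k hk heq hTint hTpos φ1 hφ1 hφ1pos
end

section
/- Let $-\xi$ be a subordinator with killing rate $q\ge0$, no drift and finite Lévy measure $\Pi\ne 0$, and let $f(x)=-\ln\mathbb{P}(I>x)$ where $I$ is the exponential functional. Then $f'(x)=k(x)/\mathbb{P}(I>x)\to \Pi(0,\infty)+q$ as $x\to\infty$, where $k$ is the density of $I$. -/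
/-!
Write `T x = ℙ(I > x)` and `R x = ∫ T(x e^v) Π(dv)`, so that `k = (Π(0,∞) + q) T - R` and it
suffices to show `R x / T x → 0`. Fix `v₀ > 0` and `μ = e^{v₀}`. Discarding the jumps below `v₀`
in the equation for `k` gives `k t ≥ Π(v₀,∞) (T t - T(μ t))`; integrating over `(x, ∞)`,
`T x ≥ Π(v₀,∞) ∫_x^{μx} T ≥ Π(v₀,∞) (μ - 1) x T(μ x)`. Hence
`R x ≤ Π(0,v₀] T x + Π(v₀,∞) T(μ x) ≤ (Π(0,v₀] + 1 / ((μ - 1) x)) T x`,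
and both terms are small once `v₀` is small and then `x` is large.
-/

open MeasureTheory Filter Real Set
open scoped ENNReal Topology

lemma tendsto_measure_Ioc_zero_toReal_nhdsGT (Λ : Measure ℝ) [IsFiniteMeasure Λ] :
    Tendsto (fun δ => (Λ (Ioc 0 δ)).toReal) (𝓝[>] 0) (𝓝 0) := by
  have h := tendsto_measure_biInter_gt (μ := Λ) (s := fun δ => Ioc (0 : ℝ) δ) (a := 0)
    (fun _ _ => measurableSet_Ioc.nullMeasurableSet)
    (fun _ _ _ hij => Ioc_subset_Ioc_right hij) ⟨1, one_pos, measure_ne_top _ _⟩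
  have hempty : (⋂ δ > (0 : ℝ), Ioc 0 δ) = ∅ := by
    refine eq_empty_iff_forall_notMem.2 fun y hy => ?_
    simp only [mem_iInter, mem_Ioc] at hy
    have hy0 := (hy 1 one_pos).1
    linarith [(hy (y / 2) (half_pos hy0)).2]
  rw [hempty, measure_empty] at h
  exact (ENNReal.tendsto_toReal ENNReal.zero_ne_top).comp h

lemma antitone_measure_Ioi_toReal (ν : Measure ℝ) [IsFiniteMeasure ν] :
    Antitone fun x => (ν (Ioi x)).toReal :=
  fun _ _ hab => ENNReal.toReal_mono (measure_ne_top _ _) (measure_mono (Ioi_subset_Ioi hab))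

lemma setIntegral_le_toReal_withDensity {α : Type*} [MeasurableSpace α] {μ : Measure α}
    {k g : α → ℝ} {s : Set α} (hs : MeasurableSet s)
    (hfin : μ.withDensity (fun t => ENNReal.ofReal (k t)) s ≠ ∞) (hg : IntegrableOn g s μ)
    (hg0 : ∀ t ∈ s, 0 ≤ g t) (hgk : ∀ t ∈ s, g t ≤ k t) :
    ∫ t in s, g t ∂μ ≤ (μ.withDensity (fun t => ENNReal.ofReal (k t)) s).toReal := by
  rw [← ENNReal.toReal_ofReal (setIntegral_nonneg hs hg0)]
  refine ENNReal.toReal_mono hfin ?_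
  rw [withDensity_apply _ hs,
    ofReal_integral_eq_lintegral_ofReal hg ((ae_restrict_iff' hs).2 (ae_of_all _ hg0))]
  exact setLIntegral_mono' hs fun t ht => ENNReal.ofReal_le_ofReal (hgk t ht)

section AntitoneTail

variable {T : ℝ → ℝ}

lemma Antitone.apply_mul_exp_le (hT : Antitone T) {x v : ℝ} (hx : 0 ≤ x) (hv : 0 ≤ v) :
    T (x * exp v) ≤ T x :=
  hT (le_mul_of_one_le_right hx (one_le_exp hv))

lemma integrableOn_Ioi_zero_comp_mul_exp (hT : Antitone T) (hT0 : ∀ x, 0 ≤ T x)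
    (Λ : Measure ℝ) [IsFiniteMeasure Λ] {x : ℝ} (hx : 0 ≤ x) :
    IntegrableOn (fun v => T (x * exp v)) (Ioi 0) Λ := by
  refine Measure.integrableOn_of_bounded (M := T x) (measure_ne_top _ _)
    (hT.measurable.comp (measurable_const.mul measurable_exp)).aestronglyMeasurable ?_
  refine (ae_restrict_iff' measurableSet_Ioi).2 (ae_of_all _ fun v hv => ?_)
  rw [Real.norm_of_nonneg (hT0 _)]
  exact hT.apply_mul_exp_le hx (le_of_lt hv)

lemma setIntegral_Ioi_zero_comp_mul_exp_le (hT : Antitone T) (hT0 : ∀ x, 0 ≤ T x)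
    (Λ : Measure ℝ) [IsFiniteMeasure Λ] {x v₀ : ℝ} (hx : 0 ≤ x) (hv₀ : 0 ≤ v₀) :
    ∫ v in Ioi 0, T (x * exp v) ∂Λ ≤
      (Λ (Ioc 0 v₀)).toReal * T x + (Λ (Ioi v₀)).toReal * T (x * exp v₀) := by
  have hint := integrableOn_Ioi_zero_comp_mul_exp hT hT0 Λ hx
  rw [← Ioc_union_Ioi_eq_Ioi hv₀, setIntegral_union (Ioc_disjoint_Ioi le_rfl) measurableSet_Ioi
    (hint.mono_set Ioc_subset_Ioi_self) (hint.mono_set (Ioi_subset_Ioi hv₀))]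
  gcongr ?_ + ?_
  · calc ∫ v in Ioc 0 v₀, T (x * exp v) ∂Λ ≤ ∫ _ in Ioc 0 v₀, T x ∂Λ :=
          setIntegral_mono_on (hint.mono_set Ioc_subset_Ioi_self) (integrable_const _).integrableOn
            measurableSet_Ioc fun v hv => hT.apply_mul_exp_le hx hv.1.le
      _ = _ := by rw [setIntegral_const, smul_eq_mul, measureReal_def]
  · calc ∫ v in Ioi v₀, T (x * exp v) ∂Λ ≤ ∫ _ in Ioi v₀, T (x * exp v₀) ∂Λ :=
          setIntegral_mono_on (hint.mono_set (Ioi_subset_Ioi hv₀))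
            (integrable_const _).integrableOn measurableSet_Ioi
            fun v hv => hT (mul_le_mul_of_nonneg_left (exp_le_exp.2 (le_of_lt hv)) hx)
      _ = _ := by rw [setIntegral_const, smul_eq_mul, measureReal_def]

lemma mul_sub_le_setIntegral_Ioi_zero_sub_comp_mul_exp (hT : Antitone T) (hT0 : ∀ x, 0 ≤ T x)
    (Λ : Measure ℝ) [IsFiniteMeasure Λ] {t v₀ : ℝ} (ht : 0 ≤ t) (hv₀ : 0 ≤ v₀) :
    (Λ (Ioi v₀)).toReal * (T t - T (t * exp v₀)) ≤
      ∫ v in Ioi 0, (T t - T (t * exp v)) ∂Λ := by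
  have hint : IntegrableOn (fun v => T t - T (t * exp v)) (Ioi 0) Λ :=
    (integrable_const _).sub (integrableOn_Ioi_zero_comp_mul_exp hT hT0 Λ ht)
  calc (Λ (Ioi v₀)).toReal * (T t - T (t * exp v₀))
      = ∫ _ in Ioi v₀, (T t - T (t * exp v₀)) ∂Λ := by
        rw [setIntegral_const, smul_eq_mul, measureReal_def]
    _ ≤ ∫ v in Ioi v₀, (T t - T (t * exp v)) ∂Λ :=
        setIntegral_mono_on (integrable_const _).integrableOn (hint.mono_set (Ioi_subset_Ioi hv₀))
          measurableSet_Ioi fun v hv =>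
            sub_le_sub_left (hT (mul_le_mul_of_nonneg_left (exp_le_exp.2 (le_of_lt hv)) ht)) _
    _ ≤ ∫ v in Ioi 0, (T t - T (t * exp v)) ∂Λ :=
        setIntegral_mono_set hint
          ((ae_restrict_iff' measurableSet_Ioi).2 (ae_of_all _ fun v hv =>
            sub_nonneg.2 (hT.apply_mul_exp_le ht (le_of_lt hv))))
          (Ioi_subset_Ioi hv₀).eventuallyLE

lemma integrableOn_Ioi_comp_mul_right_of_Ioi_zero (hTint : IntegrableOn T (Ioi 0)) {x μ : ℝ}
    (hx : 0 ≤ x) (hμ : 0 < μ) : IntegrableOn (fun t => T (t * μ)) (Ioi x) :=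
  (integrableOn_Ioi_comp_mul_right_iff T x hμ).2
    (hTint.mono_set (Ioi_subset_Ioi (mul_nonneg hx hμ.le)))

lemma mul_le_setIntegral_Ioi_sub_comp_mul (hT : Antitone T) (hT0 : ∀ x, 0 ≤ T x)
    (hTint : IntegrableOn T (Ioi 0)) {x μ : ℝ} (hx : 0 ≤ x) (hμ : 1 ≤ μ) :
    (μ - 1) * x * T (x * μ) ≤ ∫ t in Ioi x, (T t - T (t * μ)) := by
  have hμ0 : 0 < μ := by linarith
  have hxμ : x ≤ x * μ := le_mul_of_one_le_right hx hμ
  have hint : IntegrableOn T (Ioi x) := hTint.mono_set (Ioi_subset_Ioi hx)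
  have hsplit : ∫ t in Ioi x, T t = (∫ t in Ioc x (x * μ), T t) + ∫ t in Ioi (x * μ), T t := by
    rw [← setIntegral_union (Ioc_disjoint_Ioi le_rfl) measurableSet_Ioi
      (hint.mono_set Ioc_subset_Ioi_self) (hint.mono_set (Ioi_subset_Ioi hxμ)),
      Ioc_union_Ioi_eq_Ioi hxμ]
  have hscale : ∫ t in Ioi x, T (t * μ) ≤ ∫ t in Ioi (x * μ), T t := by
    rw [integral_comp_mul_right_Ioi T x hμ0, smul_eq_mul]
    exact mul_le_of_le_one_left (setIntegral_nonneg measurableSet_Ioi fun t _ => hT0 t)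
      (inv_le_one_of_one_le₀ hμ)
  have hbox : (μ - 1) * x * T (x * μ) ≤ ∫ t in Ioc x (x * μ), T t :=
    calc (μ - 1) * x * T (x * μ) = ∫ _ in Ioc x (x * μ), T (x * μ) := by
          rw [setIntegral_const, smul_eq_mul, measureReal_def, Real.volume_Ioc,
            ENNReal.toReal_ofReal (by linarith)]
          ring
      _ ≤ ∫ t in Ioc x (x * μ), T t :=
          setIntegral_mono_on (integrableOn_const measure_Ioc_lt_top.ne)
            (hint.mono_set Ioc_subset_Ioi_self) measurableSet_Ioc fun t ht => hT ht.2
  rw [integral_sub hint (integrableOn_Ioi_comp_mul_right_of_Ioi_zero hTint hx hμ0)]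
  linarith

lemma tendsto_setIntegral_Ioi_zero_comp_mul_exp_div_atTop (hT : Antitone T)
    (hT0 : ∀ x, 0 ≤ T x) (hTpos : ∀ x > 0, 0 < T x) (Λ : Measure ℝ) [IsFiniteMeasure Λ]
    (hdecay : ∀ v₀ > 0, ∀ x > 0,
      (Λ (Ioi v₀)).toReal * ((exp v₀ - 1) * x * T (x * exp v₀)) ≤ T x) :
    Tendsto (fun x => (∫ v in Ioi 0, T (x * exp v) ∂Λ) / T x) atTop (𝓝 0) := by
  refine tendsto_order.2 ⟨fun a ha => ?_, fun ε hε => ?_⟩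
  · filter_upwards with x
    exact ha.trans_le (div_nonneg (setIntegral_nonneg measurableSet_Ioi fun _ _ => hT0 _) (hT0 x))
  obtain ⟨v₀, hsmall, hv₀⟩ := (((tendsto_measure_Ioc_zero_toReal_nhdsGT Λ).eventually
    (gt_mem_nhds (half_pos hε))).and self_mem_nhdsWithin).exists
  have hμ : 0 < exp v₀ - 1 := by linarith [add_one_lt_exp (ne_of_gt hv₀)]
  have hlarge : ∀ᶠ x in atTop, ((exp v₀ - 1) * x)⁻¹ < ε / 2 :=
    (tendsto_inv_atTop_zero.comp (tendsto_id.const_mul_atTop hμ)).eventually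
      (gt_mem_nhds (half_pos hε))
  filter_upwards [eventually_gt_atTop 0, hlarge] with x hx hxlarge
  have hTx := hTpos x hx
  have hd : 0 < (exp v₀ - 1) * x := mul_pos hμ hx
  have hfar : (Λ (Ioi v₀)).toReal * T (x * exp v₀) ≤ T x * ((exp v₀ - 1) * x)⁻¹ := by
    rw [← div_eq_mul_inv, le_div_iff₀ hd]
    linear_combination hdecay v₀ hv₀ x hx
  have hnear : (Λ (Ioc 0 v₀)).toReal * T x < ε / 2 * T x := mul_lt_mul_of_pos_right hsmall hTx
  rw [div_lt_iff₀ hTx]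
  linarith [setIntegral_Ioi_zero_comp_mul_exp_le hT hT0 Λ hx.le hv₀.le,
    mul_lt_mul_of_pos_left hxlarge hTx]

end AntitoneTail

lemma mul_measure_Ioi_mul_toReal_le_of_le_density {ν : Measure ℝ} [IsFiniteMeasure ν] {k : ℝ → ℝ}
    (hk : ν = volume.withDensity fun x => ENNReal.ofReal (k x))
    (hint : IntegrableOn (fun u => (ν (Ioi u)).toReal) (Ioi 0))
    {c μ x : ℝ} (hc : 0 ≤ c) (hμ : 1 ≤ μ) (hx : 0 ≤ x)
    (hk_ge : ∀ t > x, c * ((ν (Ioi t)).toReal - (ν (Ioi (t * μ))).toReal) ≤ k t) :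
    c * ((μ - 1) * x * (ν (Ioi (x * μ))).toReal) ≤ (ν (Ioi x)).toReal := by
  have hT := antitone_measure_Ioi_toReal ν
  have hT0 : ∀ u, 0 ≤ (ν (Ioi u)).toReal := fun _ => ENNReal.toReal_nonneg
  have hμ0 : 0 < μ := by linarith
  calc c * ((μ - 1) * x * (ν (Ioi (x * μ))).toReal)
      ≤ c * ∫ t in Ioi x, ((ν (Ioi t)).toReal - (ν (Ioi (t * μ))).toReal) :=
        mul_le_mul_of_nonneg_left (mul_le_setIntegral_Ioi_sub_comp_mul hT hT0 hint hx hμ) hc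
    _ = ∫ t in Ioi x, c * ((ν (Ioi t)).toReal - (ν (Ioi (t * μ))).toReal) :=
        (integral_const_mul _ _).symm
    _ ≤ (volume.withDensity (fun t => ENNReal.ofReal (k t)) (Ioi x)).toReal :=
        setIntegral_le_toReal_withDensity measurableSet_Ioi (hk ▸ measure_ne_top _ _)
          (((hint.mono_set (Ioi_subset_Ioi hx)).sub
            (integrableOn_Ioi_comp_mul_right_of_Ioi_zero hint hx hμ0)).const_mul c)
          (fun t ht => mul_nonneg hc (sub_nonneg.2
            (hT (le_mul_of_one_le_right (hx.trans (le_of_lt ht)) hμ))))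
          hk_ge
    _ = (ν (Ioi x)).toReal := by rw [hk]

theorem stmt11_general (q : ℝ) (hq : 0 ≤ q)
    (Pim : Measure ℝ) [IsFiniteMeasure Pim]
    (ν : Measure ℝ) [IsProbabilityMeasure ν]
    (k : ℝ → ℝ) (hk : ν = volume.withDensity fun x => ENNReal.ofReal (k x))
    (heq : ∀ x > (0:ℝ), k x =
      (∫ v in Set.Ioi (0:ℝ),
        ((ν (Set.Ioi x)).toReal - (ν (Set.Ioi (x * Real.exp v))).toReal) ∂Pim)
      + q * (ν (Set.Ioi x)).toReal)
    (hTpos : ∀ x > (0:ℝ), 0 < (ν (Set.Ioi x)).toReal)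
    (hTint : IntegrableOn (fun u => (ν (Set.Ioi u)).toReal) (Set.Ioi 0)) :
    Tendsto (fun x => k x / (ν (Set.Ioi x)).toReal) atTop
      (𝓝 ((Pim (Set.Ioi (0:ℝ))).toReal + q)) := by
  set T : ℝ → ℝ := fun x => (ν (Ioi x)).toReal
  have hT : Antitone T := antitone_measure_Ioi_toReal ν
  have hT0 : ∀ x, 0 ≤ T x := fun _ => ENNReal.toReal_nonneg
  have hk_eq : ∀ x > 0,
      k x = ((Pim (Ioi 0)).toReal + q) * T x - ∫ v in Ioi 0, T (x * exp v) ∂Pim := by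
    intro x hx
    rw [heq x hx, integral_sub (integrable_const _)
      (integrableOn_Ioi_zero_comp_mul_exp hT hT0 Pim hx.le), setIntegral_const, smul_eq_mul,
      measureReal_def]
    ring
  have hdecay : ∀ v₀ > 0, ∀ x > 0,
      (Pim (Ioi v₀)).toReal * ((exp v₀ - 1) * x * T (x * exp v₀)) ≤ T x := by
    intro v₀ hv₀ x hx
    refine mul_measure_Ioi_mul_toReal_le_of_le_density hk hTint ENNReal.toReal_nonneg
      (one_le_exp hv₀.le) hx.le fun t ht => ?_
    have ht0 : 0 < t := hx.trans ht
    calc _ ≤ ∫ v in Ioi 0, (T t - T (t * exp v)) ∂Pim :=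
          mul_sub_le_setIntegral_Ioi_zero_sub_comp_mul_exp hT hT0 Pim ht0.le hv₀.le
      _ ≤ k t := by rw [heq t ht0]; linarith [mul_nonneg hq (hT0 t)]
  have hratio := tendsto_setIntegral_Ioi_zero_comp_mul_exp_div_atTop hT hT0 hTpos Pim hdecay
  refine (sub_zero ((Pim (Ioi 0)).toReal + q) ▸ tendsto_const_nhds.sub hratio).congr' ?_
  filter_upwards [eventually_gt_atTop 0] with x hx
  change _ = k x / T x
  rw [hk_eq x hx, sub_div, mul_div_cancel_right₀ _ (hTpos x hx).ne']

theorem stmt11 (q : ℝ) (hq : 0 ≤ q)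
    (Pim : Measure ℝ) [IsFiniteMeasure Pim] (hsupp : ∀ᵐ x ∂Pim, 0 < x)
    (hne : Pim (Set.Ioi (0:ℝ)) ≠ 0)
    (ν : Measure ℝ) [IsProbabilityMeasure ν]
    (k : ℝ → ℝ) (hk : ν = volume.withDensity fun x => ENNReal.ofReal (k x))
    (heq : ∀ x > (0:ℝ), k x =
      (∫ v in Set.Ioi (0:ℝ),
        ((ν (Set.Ioi x)).toReal - (ν (Set.Ioi (x * Real.exp v))).toReal) ∂Pim)
      + q * (ν (Set.Ioi x)).toReal)
    (hTpos : ∀ x > (0:ℝ), 0 < (ν (Set.Ioi x)).toReal)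
    (hTint : IntegrableOn (fun u => (ν (Set.Ioi u)).toReal) (Set.Ioi 0)) :
    Tendsto (fun x => k x / (ν (Set.Ioi x)).toReal) atTop
      (𝓝 ((Pim (Set.Ioi (0:ℝ))).toReal + q)) :=
  stmt11_general q hq Pim ν k hk heq hTpos hTint
end
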